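/- arXiv:2511.04413 — 5 statements merged into one kernel-verified Lean document; each statement's English description precedes it below -/
import Mathlib

section
/- There exists an absolute constant C > 0 such that the following holds. Let d ≥ 1 and 1 ≤ p ≤ N be integers, and let x₁, …, x_N ∈ ℝ^d satisfy (1/N)·Σ_{i=1}^N ‖x_i‖⁸ ≤ 1. Let x̄ = (1/N)·Σ_{i=1}^N x_i, and let θ be a uniformly random p-element subset of {1,…,N}. Then E_θ[‖(1/p)·Σ_{i∈θ} x_i − x̄‖⁸] ≤ C/p⁴. -/
open Finset
open scoped RealInnerProductSpace

set_option maxHeartbeats 1000000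

namespace SWR

variable {N p : ℕ} {E : Type*} [NormedAddCommGroup E] [InnerProductSpace ℝ E]

/-- position map -/
def kap {p : ℕ} (m : Fin 4 → Fin p × Fin p) : Fin 4 × Bool → Fin p :=
  fun r => if r.2 then (m r.1).2 else (m r.1).1

lemma vanish (y : Fin N → E) (hsum : ∑ i, y i = 0) (m : Fin 4 → Fin p × Fin p)
    (r₀ : Fin 4 × Bool) (hsing : ∀ r, kap m r = kap m r₀ → r = r₀) :
    ∑ j : (Fin p → Fin N), ∏ t : Fin 4, ⟪y (j (m t).1), y (j (m t).2)⟫ = 0 := by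
  classical
  set v := kap m r₀ with hv
  obtain ⟨t₀, b₀⟩ := r₀
  set e := Equiv.funSplitAt v (Fin N) with he
  rw [← e.symm.sum_comp]
  rw [Fintype.sum_prod_type, Finset.sum_comm]
  apply Finset.sum_eq_zero
  intro h _
  have hval : ∀ i : Fin N, (e.symm (i, h)) v = i := fun i =>
    congrArg Prod.fst (e.apply_symm_apply (i, h))
  have hoff : ∀ (i : Fin N) (u : Fin p) (hu : u ≠ v), (e.symm (i, h)) u = h ⟨u, hu⟩ :=
    fun i u hu => congrFun (congrArg Prod.snd (e.apply_symm_apply (i, h))) ⟨u, hu⟩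
  set z : Fin p → E := fun u => if hu : u = v then 0 else y (h ⟨u, hu⟩) with hz
  have hzoff : ∀ (i : Fin N) (u : Fin p) (hu : u ≠ v), y ((e.symm (i, h)) u) = z u := by
    intro i u hu
    rw [hoff i u hu, hz]
    simp [hu]
  cases b₀ with
  | false =>
    have h1 : (m t₀).1 = v := by simp [hv, kap]
    have h2 : (m t₀).2 ≠ v := by
      intro hc
      have : kap m (t₀, true) = v := by simp [kap, hc]
      exact Bool.noConfusion (congrArg Prod.snd (hsing _ this))
    have key : ∀ i : Fin N, (∏ t : Fin 4, ⟪y ((e.symm (i, h)) (m t).1), y ((e.symm (i, h)) (m t).2)⟫)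
        = ⟪y i, z (m t₀).2⟫ * ∏ t ∈ univ.erase t₀, ⟪z (m t).1, z (m t).2⟫ := by
      intro i
      rw [← Finset.mul_prod_erase univ _ (Finset.mem_univ t₀)]
      congr 1
      · rw [h1, hval, hzoff i _ h2]
      · apply Finset.prod_congr rfl
        intro t ht
        have htne : t ≠ t₀ := Finset.ne_of_mem_erase ht
        have hm1 : (m t).1 ≠ v := by
          intro hc
          have : kap m (t, false) = v := by simp [kap, hc]
          exact htne (congrArg Prod.fst (hsing _ this))
        have hm2 : (m t).2 ≠ v := by
          intro hc
          have : kap m (t, true) = v := by simp [kap, hc]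
          exact htne (congrArg Prod.fst (hsing _ this))
        rw [hzoff i _ hm1, hzoff i _ hm2]
    calc ∑ i : Fin N, ∏ t : Fin 4, ⟪y ((e.symm (i, h)) (m t).1), y ((e.symm (i, h)) (m t).2)⟫
        = ∑ i : Fin N, ⟪y i, z (m t₀).2⟫ * ∏ t ∈ univ.erase t₀, ⟪z (m t).1, z (m t).2⟫ :=
          Finset.sum_congr rfl fun i _ => key i
      _ = (∑ i : Fin N, ⟪y i, z (m t₀).2⟫) * _ := by rw [Finset.sum_mul]
      _ = 0 := by rw [← sum_inner, hsum, inner_zero_left, zero_mul]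
  | true =>
    have h1 : (m t₀).2 = v := by simp [hv, kap]
    have h2 : (m t₀).1 ≠ v := by
      intro hc
      have : kap m (t₀, false) = v := by simp [kap, hc]
      exact Bool.noConfusion (congrArg Prod.snd (hsing _ this))
    have key : ∀ i : Fin N, (∏ t : Fin 4, ⟪y ((e.symm (i, h)) (m t).1), y ((e.symm (i, h)) (m t).2)⟫)
        = ⟪z (m t₀).1, y i⟫ * ∏ t ∈ univ.erase t₀, ⟪z (m t).1, z (m t).2⟫ := by
      intro i
      rw [← Finset.mul_prod_erase univ _ (Finset.mem_univ t₀)]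
      congr 1
      · rw [h1, hval, hzoff i _ h2]
      · apply Finset.prod_congr rfl
        intro t ht
        have htne : t ≠ t₀ := Finset.ne_of_mem_erase ht
        have hm1 : (m t).1 ≠ v := by
          intro hc
          have : kap m (t, false) = v := by simp [kap, hc]
          exact htne (congrArg Prod.fst (hsing _ this))
        have hm2 : (m t).2 ≠ v := by
          intro hc
          have : kap m (t, true) = v := by simp [kap, hc]
          exact htne (congrArg Prod.fst (hsing _ this))
        rw [hzoff i _ hm1, hzoff i _ hm2]
    calc ∑ i : Fin N, ∏ t : Fin 4, ⟪y ((e.symm (i, h)) (m t).1), y ((e.symm (i, h)) (m t).2)⟫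
        = ∑ i : Fin N, ⟪z (m t₀).1, y i⟫ * ∏ t ∈ univ.erase t₀, ⟪z (m t).1, z (m t).2⟫ :=
          Finset.sum_congr rfl fun i _ => key i
      _ = (∑ i : Fin N, ⟪z (m t₀).1, y i⟫) * _ := by rw [Finset.sum_mul]
      _ = 0 := by rw [← inner_sum, hsum, inner_zero_right, zero_mul]

lemma absbound (y : Fin N → E) (hN : ∑ i, ‖y i‖ ^ 8 ≤ 32896 * N) (m : Fin 4 → Fin p × Fin p) :
    |∑ j : (Fin p → Fin N), ∏ t : Fin 4, ⟪y (j (m t).1), y (j (m t).2)⟫|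
      ≤ 32897 ^ 8 * (N : ℝ) ^ p := by
  classical
  have step1 : |∑ j : (Fin p → Fin N), ∏ t : Fin 4, ⟪y (j (m t).1), y (j (m t).2)⟫|
      ≤ ∑ j : (Fin p → Fin N), ∏ r : Fin 4 × Bool, ‖y (j (kap m r))‖ := by
    refine (Finset.abs_sum_le_sum_abs _ _).trans (Finset.sum_le_sum ?_)
    intro j _
    rw [Finset.abs_prod]
    have : ∀ t : Fin 4, |⟪y (j (m t).1), y (j (m t).2)⟫|
        ≤ ‖y (j (kap m (t, false)))‖ * ‖y (j (kap m (t, true)))‖ := by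
      intro t
      have h1 : kap m (t, false) = (m t).1 := by simp [kap]
      have h2 : kap m (t, true) = (m t).2 := by simp [kap]
      rw [h1, h2]
      exact abs_real_inner_le_norm _ _
    calc ∏ t : Fin 4, |⟪y (j (m t).1), y (j (m t).2)⟫|
        ≤ ∏ t : Fin 4, (‖y (j (kap m (t, false)))‖ * ‖y (j (kap m (t, true)))‖) :=
          Finset.prod_le_prod (fun t _ => abs_nonneg _) (fun t _ => this t)
      _ = ∏ r : Fin 4 × Bool, ‖y (j (kap m r))‖ := by
          rw [Fintype.prod_prod_type]
          exact Finset.prod_congr rfl fun t _ => by rw [Fintype.prod_bool]; ring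
  set c : Fin p → ℕ := fun v => #(univ.filter (fun r => kap m r = v)) with hc
  have step2 : ∀ j : (Fin p → Fin N), ∏ r : Fin 4 × Bool, ‖y (j (kap m r))‖
      = ∏ v : Fin p, ‖y (j v)‖ ^ (c v) := by
    intro j
    rw [Finset.prod_comp (fun v => ‖y (j v)‖) (kap m)]
    apply Finset.prod_subset (Finset.subset_univ _)
    intro v _ hv
    have : #(univ.filter (fun r => kap m r = v)) = 0 := by
      rw [Finset.card_eq_zero, Finset.filter_eq_empty_iff]
      intro r _
      exact fun hrv => hv (hrv ▸ Finset.mem_image_of_mem (kap m) (Finset.mem_univ r))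
    rw [this, pow_zero]
  have step3 : ∑ j : (Fin p → Fin N), ∏ v : Fin p, ‖y (j v)‖ ^ (c v)
      = ∏ v : Fin p, ∑ i : Fin N, ‖y i‖ ^ (c v) := by
    rw [Finset.prod_univ_sum (fun _ => univ) (fun v i => ‖y i‖ ^ (c v)), Fintype.piFinset_univ]
  have csum : ∑ v : Fin p, c v = 8 := by
    have := Finset.card_eq_sum_card_fiberwise
      (f := kap m) (s := univ) (t := univ) (fun x _ => Finset.mem_univ _)
    simpa using this.symm
  have step4 : ∀ v : Fin p, ∑ i : Fin N, ‖y i‖ ^ (c v) ≤ 32897 ^ (c v) * N := by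
    intro v
    rcases Nat.eq_zero_or_pos (c v) with h0 | hpos
    · simp [h0]
    · have : ∀ i : Fin N, ‖y i‖ ^ (c v) ≤ 1 + ‖y i‖ ^ 8 := by
        intro i
        have hcv8 : c v ≤ 8 := by
          rw [← csum]
          exact Finset.single_le_sum (fun _ _ => Nat.zero_le _) (Finset.mem_univ v)
        rcases le_or_gt (‖y i‖) 1 with h1 | h1
        · have := pow_le_one₀ (norm_nonneg (y i)) h1 (n := c v)
          nlinarith [pow_nonneg (norm_nonneg (y i)) 8]
        · have := pow_le_pow_right₀ h1.le hcv8
          nlinarith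
      calc ∑ i : Fin N, ‖y i‖ ^ (c v) ≤ ∑ i : Fin N, (1 + ‖y i‖ ^ 8) :=
            Finset.sum_le_sum fun i _ => this i
        _ = N + ∑ i, ‖y i‖ ^ 8 := by simp [Finset.sum_add_distrib]
        _ ≤ N + 32896 * N := by linarith
        _ = 32897 * N := by ring
        _ ≤ 32897 ^ (c v) * N := by
          have : (32897 : ℝ) ≤ 32897 ^ (c v) := by
            calc (32897:ℝ) = 32897 ^ 1 := (pow_one _).symm
            _ ≤ 32897 ^ (c v) := pow_le_pow_right₀ (by norm_num) hpos
          have hNn : (0:ℝ) ≤ N := Nat.cast_nonneg _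
          nlinarith
  calc |∑ j : (Fin p → Fin N), ∏ t : Fin 4, ⟪y (j (m t).1), y (j (m t).2)⟫|
      ≤ ∑ j : (Fin p → Fin N), ∏ r : Fin 4 × Bool, ‖y (j (kap m r))‖ := step1
    _ = ∏ v : Fin p, ∑ i : Fin N, ‖y i‖ ^ (c v) := by
        rw [Finset.sum_congr rfl fun j _ => step2 j, step3]
    _ ≤ ∏ v : Fin p, (32897 ^ (c v) * (N:ℝ)) :=
        Finset.prod_le_prod (fun v _ => Finset.sum_nonneg fun i _ => pow_nonneg (norm_nonneg _) _)
          (fun v _ => step4 v)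
    _ = 32897 ^ 8 * (N:ℝ) ^ p := by
        rw [Finset.prod_mul_distrib, Finset.prod_const, Finset.prod_pow_eq_pow_sum, csum,
          Finset.card_univ, Fintype.card_fin]

lemma count_bad {p : ℕ} (hp : 1 ≤ p) :
    #(univ.filter (fun m : Fin 4 → Fin p × Fin p =>
        ∀ r₀, ∃ r, r ≠ r₀ ∧ kap m r = kap m r₀)) ≤ 4 ^ 8 * p ^ 4 := by
  classical
  set σ : (Fin 4 → Fin p × Fin p) → (Fin 4 × Bool → Fin 4) := fun m r =>
    ⟨min ((univ.image (kap m)).equivFin ⟨kap m r,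
      Finset.mem_image_of_mem _ (Finset.mem_univ r)⟩).val 3, by omega⟩ with hσ
  set ι : (Fin 4 → Fin p × Fin p) → (Fin 4 → Fin p) := fun m i =>
    if h : (i : ℕ) < #(univ.image (kap m)) then
      ((univ.image (kap m)).equivFin.symm ⟨i, h⟩ : {x // x ∈ univ.image (kap m)}).val
    else ⟨0, hp⟩ with hι
  have key : ∀ m ∈ (univ.filter (fun m : Fin 4 → Fin p × Fin p =>
        ∀ r₀, ∃ r, r ≠ r₀ ∧ kap m r = kap m r₀)), ∀ r, ι m (σ m r) = kap m r := by
    intro m hm r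
    rw [Finset.mem_filter] at hm
    have hbad := hm.2
    -- each fiber has ≥ 2 elements, so the image has card ≤ 4
    have hcard : #(univ.image (kap m)) ≤ 4 := by
      have h8 : #(univ : Finset (Fin 4 × Bool)) = ∑ v ∈ univ.image (kap m),
          #(univ.filter (fun r => kap m r = v)) :=
        Finset.card_eq_sum_card_fiberwise (fun x _ => Finset.mem_image_of_mem _ (Finset.mem_univ x))
      have h2 : ∀ v ∈ univ.image (kap m), 2 ≤ #(univ.filter (fun r => kap m r = v)) := by
        intro v hv
        obtain ⟨r, _, hrv⟩ := Finset.mem_image.mp hv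
        obtain ⟨r', hne, hr'⟩ := hbad r
        refine Finset.one_lt_card.mpr ⟨r', by simp [hr', hrv], r, by simp [hrv], hne⟩
      have := Finset.card_nsmul_le_sum (univ.image (kap m)) _ 2 h2
      rw [← h8] at this
      have h82 : #(univ : Finset (Fin 4 × Bool)) = 8 := by simp
      rw [h82, smul_eq_mul] at this
      omega
    have hidx : (((univ.image (kap m)).equivFin ⟨kap m r,
        Finset.mem_image_of_mem _ (Finset.mem_univ r)⟩).val) < #(univ.image (kap m)) :=
      ((univ.image (kap m)).equivFin _).isLt
    have hmin : min (((univ.image (kap m)).equivFin ⟨kap m r,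
        Finset.mem_image_of_mem _ (Finset.mem_univ r)⟩).val) 3
        = (((univ.image (kap m)).equivFin ⟨kap m r,
        Finset.mem_image_of_mem _ (Finset.mem_univ r)⟩).val) := by omega
    simp only [hι, hσ]
    rw [dif_pos (by rw [hmin]; exact hidx)]
    have : (⟨min (((univ.image (kap m)).equivFin ⟨kap m r,
        Finset.mem_image_of_mem _ (Finset.mem_univ r)⟩).val) 3, by rw [hmin]; exact hidx⟩ :
        Fin #(univ.image (kap m)))
        = ((univ.image (kap m)).equivFin ⟨kap m r,
        Finset.mem_image_of_mem _ (Finset.mem_univ r)⟩) := by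
      apply Fin.ext; simp [hmin]
    rw [this, Equiv.symm_apply_apply]
  have inj : Set.InjOn (fun m => (σ m, ι m)) ↑(univ.filter (fun m : Fin 4 → Fin p × Fin p =>
        ∀ r₀, ∃ r, r ≠ r₀ ∧ kap m r = kap m r₀)) := by
    intro m hm m' hm' heq
    have h1 : ∀ r, kap m r = kap m' r := by
      intro r
      have e1 := key m (Finset.mem_coe.mp hm) r
      have e2 := key m' (Finset.mem_coe.mp hm') r
      simp only [Prod.mk.injEq] at heq
      rw [← e1, ← e2, heq.1, heq.2]
    funext t
    have hf := h1 (t, false)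
    have ht := h1 (t, true)
    simp only [kap] at hf ht
    simp at hf ht
    exact Prod.ext hf ht
  calc #(univ.filter (fun m : Fin 4 → Fin p × Fin p =>
        ∀ r₀, ∃ r, r ≠ r₀ ∧ kap m r = kap m r₀))
      ≤ #(univ : Finset ((Fin 4 × Bool → Fin 4) × (Fin 4 → Fin p))) :=
        Finset.card_le_card_of_injOn _ (fun a _ => Finset.mem_univ _) inj
    _ = 4 ^ 8 * p ^ 4 := by
        rw [Finset.card_univ, Fintype.card_prod, Fintype.card_fun, Fintype.card_fun,
          Fintype.card_prod, Fintype.card_bool]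
        norm_num

lemma part2 {N p : ℕ} {E : Type*} [NormedAddCommGroup E] [InnerProductSpace ℝ E]
    (hp : 1 ≤ p) (y : Fin N → E) (hsum : ∑ i, y i = 0)
    (hmom : ∑ i, ‖y i‖ ^ 8 ≤ 32896 * N) :
    ∑ j : (Fin p → Fin N), ‖∑ k, y (j k)‖ ^ 8
      ≤ (4 ^ 8 * 32897 ^ 8) * (p : ℝ) ^ 4 * (N : ℝ) ^ p := by
  classical
  have expand : ∀ j : (Fin p → Fin N), ‖∑ k, y (j k)‖ ^ 8
      = ∑ m : (Fin 4 → Fin p × Fin p), ∏ t : Fin 4, ⟪y (j (m t).1), y (j (m t).2)⟫ := by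
    intro j
    have h1 : ‖∑ k, y (j k)‖ ^ 8 = (⟪∑ k, y (j k), ∑ k, y (j k)⟫) ^ 4 := by
      rw [real_inner_self_eq_norm_sq]; ring
    rw [h1, sum_inner]
    simp_rw [inner_sum]
    rw [← Fintype.sum_prod_type (f := fun kl : Fin p × Fin p => ⟪y (j kl.1), y (j kl.2)⟫)]
    rw [Finset.sum_pow', Fintype.piFinset_univ]
  rw [Finset.sum_congr rfl fun j _ => expand j, Finset.sum_comm]
  set T : (Fin 4 → Fin p × Fin p) → ℝ := fun m =>
    ∑ j : (Fin p → Fin N), ∏ t : Fin 4, ⟪y (j (m t).1), y (j (m t).2)⟫ with hT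
  set bad : (Fin 4 → Fin p × Fin p) → Prop := fun m =>
    ∀ r₀, ∃ r, r ≠ r₀ ∧ kap m r = kap m r₀ with hbad
  have hzero : ∀ m ∈ univ.filter (fun m => ¬ bad m), T m = 0 := by
    intro m hm
    rw [Finset.mem_filter, hbad] at hm
    have h2 : ¬ ∀ r₀, ∃ r, r ≠ r₀ ∧ kap m r = kap m r₀ := hm.2
    obtain ⟨r₀, hr₀⟩ := not_forall.mp h2
    refine vanish y hsum m r₀ (fun r hr => ?_)
    by_contra hne
    exact hr₀ ⟨r, hne, hr⟩
  have hsplit : ∑ m : (Fin 4 → Fin p × Fin p), T m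
      = ∑ m ∈ univ.filter bad, T m := by
    rw [← Finset.sum_filter_add_sum_filter_not univ bad T,
      Finset.sum_eq_zero hzero, add_zero]
  rw [hsplit]
  have habs : ∀ m ∈ univ.filter bad, T m ≤ 32897 ^ 8 * (N : ℝ) ^ p := by
    intro m _
    exact (le_abs_self _).trans (absbound y hmom m)
  calc ∑ m ∈ univ.filter bad, T m
      ≤ ∑ m ∈ univ.filter bad, (32897 ^ 8 * (N : ℝ) ^ p) := Finset.sum_le_sum habs
    _ = #(univ.filter bad) * (32897 ^ 8 * (N : ℝ) ^ p) := by
        rw [Finset.sum_const, nsmul_eq_mul]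
    _ ≤ (4 ^ 8 * p ^ 4 : ℕ) * (32897 ^ 8 * (N : ℝ) ^ p) := by
        have hcnt := count_bad (p := p) hp
        have hkn : (0:ℝ) ≤ 32897 ^ 8 * (N : ℝ) ^ p := by positivity
        exact mul_le_mul_of_nonneg_right (by exact_mod_cast hcnt) hkn
    _ = (4 ^ 8 * 32897 ^ 8) * (p : ℝ) ^ 4 * (N : ℝ) ^ p := by
        push_cast; ring

noncomputable def w (j : Fin p → Fin N) (θ : Finset (Fin N)) : ℝ :=
  if univ.image j ⊆ θ then ((N - #(univ.image j)).choose (p - #(univ.image j)) : ℝ)⁻¹ else 0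

lemma card_supersets (V : Finset (Fin N)) {k : ℕ} (hV : #V ≤ k) :
    #((powersetCard k (univ : Finset (Fin N))).filter (fun θ => V ⊆ θ))
      = (N - #V).choose (k - #V) := by
  classical
  have h1 : #((powersetCard k (univ : Finset (Fin N))).filter (fun θ => V ⊆ θ))
      = #(powersetCard (k - #V) Vᶜ) := by
    apply Finset.card_bij' (i := fun θ _ => θ \ V) (j := fun s _ => s ∪ V)
    · intro θ hθ
      rw [Finset.mem_filter, Finset.mem_powersetCard_univ] at hθ
      rw [Finset.mem_powersetCard]
      refine ⟨fun x hx => ?_, ?_⟩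
      · rw [Finset.mem_compl]
        exact (Finset.mem_sdiff.mp hx).2
      · rw [Finset.card_sdiff_of_subset hθ.2, hθ.1]
    · intro s hs
      rw [Finset.mem_powersetCard] at hs
      have hdisj : Disjoint s V := by
        rw [Finset.disjoint_left]
        intro x hx
        exact Finset.mem_compl.mp (hs.1 hx)
      rw [Finset.mem_filter, Finset.mem_powersetCard_univ]
      refine ⟨?_, Finset.subset_union_right⟩
      rw [Finset.card_union_of_disjoint hdisj, hs.2]
      omega
    · intro θ hθ
      rw [Finset.mem_filter] at hθ
      exact Finset.sdiff_union_of_subset hθ.2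
    · intro s hs
      rw [Finset.mem_powersetCard] at hs
      have hdisj : Disjoint s V := by
        rw [Finset.disjoint_left]
        intro x hx
        exact Finset.mem_compl.mp (hs.1 hx)
      exact Finset.union_sdiff_cancel_right hdisj
  rw [h1, Finset.card_powersetCard, Finset.card_compl, Fintype.card_fin]

lemma R_le (j : Fin p → Fin N) : #(univ.image j) ≤ p := by
  calc #(univ.image j) ≤ #(univ : Finset (Fin p)) := Finset.card_image_le
    _ = p := by rw [Finset.card_univ, Fintype.card_fin]

lemma wA (hpN : p ≤ N) (j : Fin p → Fin N) :
    ∑ θ ∈ powersetCard p (univ : Finset (Fin N)), w j θ = 1 := by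
  classical
  have hR := R_le j
  have hpos : 0 < ((N - #(univ.image j)).choose (p - #(univ.image j))) :=
    Nat.choose_pos (Nat.sub_le_sub_right hpN _)
  rw [show (fun θ => w j θ) = fun θ => if univ.image j ⊆ θ then
      ((N - #(univ.image j)).choose (p - #(univ.image j)) : ℝ)⁻¹ else 0 from rfl]
  rw [Finset.sum_ite, Finset.sum_const, Finset.sum_const_zero, add_zero,
    card_supersets _ hR, nsmul_eq_mul]
  rw [mul_inv_cancel₀]
  exact_mod_cast hpos.ne'


lemma w_perm (π : Equiv.Perm (Fin N)) {θ θ' : Finset (Fin N)}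
    (hiff : ∀ x, x ∈ θ ↔ π x ∈ θ') (j : Fin p → Fin N) :
    w (π ∘ j) θ' = w j θ := by
  classical
  have himg : univ.image (π ∘ j) = (univ.image j).image π := by
    rw [Finset.image_image]
  have hcard : #(univ.image (π ∘ j)) = #(univ.image j) := by
    rw [himg, Finset.card_image_of_injective _ π.injective]
  have hsub : univ.image (π ∘ j) ⊆ θ' ↔ univ.image j ⊆ θ := by
    rw [himg]
    constructor
    · intro hs x hx
      exact (hiff x).mpr (hs (Finset.mem_image_of_mem π hx))
    · intro hs y hy
      obtain ⟨x, hx, rfl⟩ := Finset.mem_image.mp hy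
      exact (hiff x).mp (hs hx)
  unfold w
  rw [hcard]
  by_cases hc : univ.image j ⊆ θ
  · rw [if_pos (hsub.mpr hc), if_pos hc]
  · rw [if_neg (fun hc' => hc (hsub.mp hc')), if_neg hc]

lemma sum_perm (π : Equiv.Perm (Fin N)) {M : Type*} [AddCommMonoid M]
    (F : (Fin p → Fin N) → M) :
    ∑ j : (Fin p → Fin N), F (π ∘ j) = ∑ j : (Fin p → Fin N), F j := by
  exact Equiv.sum_comp ((Equiv.refl (Fin p)).arrowCongr π) F

lemma exists_perm {θ θ' : Finset (Fin N)} (hcard : #θ = #θ') :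
    ∃ π : Equiv.Perm (Fin N), ∀ x, x ∈ θ ↔ π x ∈ θ' := by
  classical
  have hcc : #θᶜ = #θ'ᶜ := by rw [Finset.card_compl, Finset.card_compl, hcard]
  let e₁ : {x // x ∈ θ} ≃ {x // x ∈ θ'} := Finset.equivOfCardEq hcard
  let e₂ : {x // x ∈ θᶜ} ≃ {x // x ∈ θ'ᶜ} := Finset.equivOfCardEq hcc
  let e₂' : {x : Fin N // ¬ x ∈ θ} ≃ {x : Fin N // ¬ x ∈ θ'} :=
    ((Equiv.subtypeEquivRight (fun x => (Finset.mem_compl (s := θ)).symm)).trans e₂).trans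
      (Equiv.subtypeEquivRight (fun x => Finset.mem_compl (s := θ')))
  refine ⟨(Equiv.sumCompl (· ∈ θ)).symm.trans ((Equiv.sumCongr e₁ e₂').trans
    (Equiv.sumCompl (· ∈ θ'))), ?_⟩
  intro x
  by_cases hx : x ∈ θ
  · simp only [Equiv.trans_apply, Equiv.sumCompl_symm_apply_of_pos hx, Equiv.sumCongr_apply,
      Sum.map_inl, Equiv.sumCompl_apply_inl]
    exact ⟨fun _ => (e₁ ⟨x, hx⟩).2, fun _ => hx⟩
  · simp only [Equiv.trans_apply, Equiv.sumCompl_symm_apply_of_neg hx, Equiv.sumCongr_apply,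
      Sum.map_inr, Equiv.sumCompl_apply_inr]
    exact ⟨fun h => absurd h hx, fun h => absurd h (e₂' ⟨x, hx⟩).2⟩


lemma w_nonneg (j : Fin p → Fin N) (θ : Finset (Fin N)) : 0 ≤ w j θ := by
  unfold w
  split
  · positivity
  · exact le_refl 0

noncomputable def cnt (a : Fin N) (j : Fin p → Fin N) : ℝ :=
  ∑ k : Fin p, if j k = a then (1 : ℝ) else 0

noncomputable def P (p : ℕ) {N : ℕ} (θ : Finset (Fin N)) : ℝ :=
  ∑ j : (Fin p → Fin N), w j θ

noncomputable def H (p : ℕ) {N : ℕ} (θ : Finset (Fin N)) (a : Fin N) : ℝ :=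
  ∑ j : (Fin p → Fin N), w j θ * cnt a j

lemma sum_cnt (j : Fin p → Fin N) : ∑ a : Fin N, cnt a j = p := by
  unfold cnt
  rw [Finset.sum_comm]
  have : ∀ k : Fin p, ∑ a : Fin N, (if j k = a then (1:ℝ) else 0) = 1 := by
    intro k
    simp
  rw [Finset.sum_congr rfl fun k _ => this k]
  simp

lemma cnt_zero {a : Fin N} {θ : Finset (Fin N)} (ha : a ∉ θ) {j : Fin p → Fin N}
    (hj : univ.image j ⊆ θ) : cnt a j = 0 := by
  unfold cnt
  apply Finset.sum_eq_zero
  intro k _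
  rw [if_neg]
  intro hk
  exact ha (hk ▸ hj (Finset.mem_image_of_mem j (Finset.mem_univ k)))

lemma H_off {a : Fin N} {θ : Finset (Fin N)} (ha : a ∉ θ) : H p θ a = 0 := by
  unfold H
  apply Finset.sum_eq_zero
  intro j _
  unfold w
  split
  · rename_i h
    rw [cnt_zero ha h, mul_zero]
  · rw [zero_mul]

lemma swap_mem_iff {a b : Fin N} {θ : Finset (Fin N)} (ha : a ∈ θ) (hb : b ∈ θ) :
    ∀ x, x ∈ θ ↔ Equiv.swap a b x ∈ θ := by
  intro x
  rcases eq_or_ne x a with rfl | hxa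
  · rw [Equiv.swap_apply_left]
    exact ⟨fun _ => hb, fun _ => ha⟩
  rcases eq_or_ne x b with rfl | hxb
  · rw [Equiv.swap_apply_right]
    exact ⟨fun _ => ha, fun _ => hb⟩
  · rw [Equiv.swap_apply_of_ne_of_ne hxa hxb]

lemma H_swap {a b : Fin N} {θ : Finset (Fin N)} (ha : a ∈ θ) (hb : b ∈ θ) :
    H p θ a = H p θ b := by
  unfold H
  have hiff := swap_mem_iff ha hb
  rw [← sum_perm (Equiv.swap a b) (fun j => w j θ * cnt b j)]
  apply Finset.sum_congr rfl
  intro j _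
  rw [w_perm (Equiv.swap a b) hiff j]
  congr 1
  unfold cnt
  apply Finset.sum_congr rfl
  intro k _
  congr 1
  simp only [Function.comp_apply, eq_iff_iff]
  constructor
  · intro h
    rw [h, Equiv.swap_apply_left]
  · intro h
    have := congrArg (Equiv.swap a b) h
    rwa [Equiv.swap_apply_self, Equiv.swap_apply_right] at this

lemma sum_H (θ : Finset (Fin N)) : ∑ a : Fin N, H p θ a = p * P p θ := by
  unfold H P
  rw [Finset.sum_comm]
  have : ∀ j : (Fin p → Fin N), ∑ a : Fin N, w j θ * cnt a j = w j θ * p := by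
    intro j
    rw [← Finset.mul_sum, sum_cnt]
  rw [Finset.sum_congr rfl fun j _ => this j]
  rw [← Finset.sum_mul]
  ring

lemma H_in (hp : 1 ≤ p) {θ : Finset (Fin N)} (hθ : #θ = p) {a : Fin N} (ha : a ∈ θ) :
    H p θ a = P p θ := by
  have h1 : ∑ b ∈ θ, H p θ b = ∑ b : Fin N, H p θ b := by
    apply Finset.sum_subset (Finset.subset_univ θ)
    intro b _ hb
    exact H_off hb
  have h2 : ∑ b ∈ θ, H p θ b = #θ * H p θ a := by
    rw [Finset.sum_congr rfl fun b hb => H_swap hb ha]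
    rw [Finset.sum_const, nsmul_eq_mul]
  have h3 : (p : ℝ) * H p θ a = p * P p θ := by
    rw [← sum_H (p := p) θ, ← h1, h2, hθ]
  have hp0 : (p : ℝ) ≠ 0 := by
    exact_mod_cast Nat.one_le_iff_ne_zero.mp hp
  exact mul_left_cancel₀ hp0 h3


variable {E : Type*} [NormedAddCommGroup E] [InnerProductSpace ℝ E]

lemma center (hp : 1 ≤ p) {θ : Finset (Fin N)} (hθ : #θ = p) (x : Fin N → E) :
    ∑ j : (Fin p → Fin N), w j θ • (∑ k, x (j k)) = P p θ • (∑ a ∈ θ, x a) := by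
  have hstep : ∀ j : Fin p → Fin N, (∑ k, x (j k)) = ∑ a : Fin N, cnt a j • x a := by
    intro j
    unfold cnt
    simp only [Finset.sum_smul, ite_smul, one_smul, zero_smul]
    rw [Finset.sum_comm]
    simp
  calc ∑ j : (Fin p → Fin N), w j θ • (∑ k, x (j k))
      = ∑ j : (Fin p → Fin N), ∑ a : Fin N, (w j θ * cnt a j) • x a := by
        apply Finset.sum_congr rfl
        intro j _
        rw [hstep j, Finset.smul_sum]
        apply Finset.sum_congr rfl
        intro a _
        rw [smul_smul]
    _ = ∑ a : Fin N, H p θ a • x a := by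
        rw [Finset.sum_comm]
        apply Finset.sum_congr rfl
        intro a _
        rw [H, Finset.sum_smul]
    _ = ∑ a ∈ θ, H p θ a • x a := by
        symm
        apply Finset.sum_subset (Finset.subset_univ θ)
        intro a _ ha
        rw [H_off ha, zero_smul]
    _ = ∑ a ∈ θ, P p θ • x a := by
        apply Finset.sum_congr rfl
        intro a ha
        rw [H_in hp hθ ha]
    _ = P p θ • (∑ a ∈ θ, x a) := by rw [Finset.smul_sum]

lemma P_const {θ θ' : Finset (Fin N)} (hθ : θ ∈ powersetCard p (univ : Finset (Fin N)))
    (hθ' : θ' ∈ powersetCard p (univ : Finset (Fin N))) : P p θ = P p θ' := by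
  rw [Finset.mem_powersetCard_univ] at hθ hθ'
  obtain ⟨π, hπ⟩ := exists_perm (hθ.trans hθ'.symm)
  unfold P
  rw [← sum_perm π (fun j => w j θ')]
  exact (Finset.sum_congr rfl fun j _ => w_perm π hπ j).symm

lemma choose_mul_P (hpN : p ≤ N) {θ : Finset (Fin N)}
    (hθ : θ ∈ powersetCard p (univ : Finset (Fin N))) :
    (N.choose p : ℝ) * P p θ = (N : ℝ) ^ p := by
  have hsum : ∑ θ' ∈ powersetCard p (univ : Finset (Fin N)), P p θ' = (N : ℝ) ^ p := by
    unfold P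
    rw [Finset.sum_comm]
    rw [Finset.sum_congr rfl fun j _ => wA hpN j]
    rw [Finset.sum_const, Finset.card_univ, nsmul_eq_mul, mul_one]
    push_cast [Fintype.card_fun]
    simp
  have hconst : ∑ θ' ∈ powersetCard p (univ : Finset (Fin N)), P p θ'
      = (N.choose p : ℝ) * P p θ := by
    rw [Finset.sum_congr rfl fun θ' hθ' => P_const hθ' hθ]
    rw [Finset.sum_const, nsmul_eq_mul, Finset.card_powersetCard, Finset.card_univ,
      Fintype.card_fin]
  rw [← hconst, hsum]

lemma jensen_step (hpN : p ≤ N) {θ : Finset (Fin N)}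
    (hθ : θ ∈ powersetCard p (univ : Finset (Fin N)))
    (hP : 0 < P p θ) (z : (Fin p → Fin N) → E) (zθ : E)
    (hz : ∑ j : (Fin p → Fin N), w j θ • z j = P p θ • zθ) :
    P p θ * ‖zθ‖ ^ 8 ≤ ∑ j : (Fin p → Fin N), w j θ * ‖z j‖ ^ 8 := by
  have hω0 : ∀ j : (Fin p → Fin N), 0 ≤ w j θ / P p θ :=
    fun j => div_nonneg (w_nonneg j θ) hP.le
  have hω : ∑ j : (Fin p → Fin N), w j θ / P p θ = 1 := by
    rw [← Finset.sum_div]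
    exact div_self hP.ne'
  have hzz : ∑ j : (Fin p → Fin N), (w j θ / P p θ) • z j = zθ := by
    have : ∀ j : (Fin p → Fin N), (w j θ / P p θ) • z j = (P p θ)⁻¹ • (w j θ • z j) := by
      intro j
      rw [smul_smul, div_eq_inv_mul]
    rw [Finset.sum_congr rfl fun j _ => this j, ← Finset.smul_sum, hz, smul_smul,
      inv_mul_cancel₀ hP.ne', one_smul]
  have hnorm : ‖zθ‖ ≤ ∑ j : (Fin p → Fin N), (w j θ / P p θ) * ‖z j‖ := by
    rw [← hzz]
    refine (norm_sum_le _ _).trans (le_of_eq ?_)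
    apply Finset.sum_congr rfl
    intro j _
    rw [norm_smul, Real.norm_eq_abs, abs_of_nonneg (hω0 j)]
  have hpow : ‖zθ‖ ^ 8 ≤ (∑ j : (Fin p → Fin N), (w j θ / P p θ) * ‖z j‖) ^ 8 :=
    pow_le_pow_left₀ (norm_nonneg _) hnorm 8
  have hjensen : (∑ j : (Fin p → Fin N), (w j θ / P p θ) • ‖z j‖) ^ 8
      ≤ ∑ j : (Fin p → Fin N), (w j θ / P p θ) • (‖z j‖ ^ 8) := by
    have h := (convexOn_pow 8).map_sum_le (t := (univ : Finset (Fin p → Fin N)))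
      (w := fun j => w j θ / P p θ) (p := fun j => ‖z j‖)
      (fun j _ => hω0 j) hω (fun j _ => Set.mem_Ici.mpr (norm_nonneg _))
    simpa using h
  have hfinal : ‖zθ‖ ^ 8 ≤ ∑ j : (Fin p → Fin N), (w j θ / P p θ) * (‖z j‖ ^ 8) := by
    refine hpow.trans ?_
    simpa [smul_eq_mul] using hjensen
  have := mul_le_mul_of_nonneg_left hfinal hP.le
  calc P p θ * ‖zθ‖ ^ 8
      ≤ P p θ * ∑ j : (Fin p → Fin N), (w j θ / P p θ) * (‖z j‖ ^ 8) := this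
    _ = ∑ j : (Fin p → Fin N), w j θ * ‖z j‖ ^ 8 := by
        rw [Finset.mul_sum]
        apply Finset.sum_congr rfl
        intro j _
        field_simp

end SWR

lemma le_one_add_pow8 (t : ℝ) (ht : 0 ≤ t) : t ≤ 1 + t ^ 8 := by
  rcases le_or_gt t 1 with h | h
  · nlinarith [pow_nonneg ht 8]
  · have := le_self_pow₀ h.le (n := 8) (by norm_num)
    linarith

theorem stmt_7 : ∃ C : ℝ, 0 < C ∧ ∀ d N p : ℕ, 1 ≤ d → 1 ≤ p → p ≤ N →
    ∀ x : Fin N → EuclideanSpace ℝ (Fin d),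
    (1 / (N : ℝ)) * ∑ i, ‖x i‖ ^ 8 ≤ 1 →
    (∑ θ ∈ Finset.powersetCard p (Finset.univ : Finset (Fin N)),
        ‖(p : ℝ)⁻¹ • (∑ i ∈ θ, x i) - (N : ℝ)⁻¹ • (∑ i, x i)‖ ^ 8) / (N.choose p : ℝ)
      ≤ C / p ^ 4 := by
  classical
  refine ⟨4 ^ 8 * 32897 ^ 8, by positivity, ?_⟩
  intro d N p hd hp hpN x hx
  set C8 : ℝ := 4 ^ 8 * 32897 ^ 8 with hC8
  have hN : 1 ≤ N := hp.trans hpN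
  have hN0 : (0 : ℝ) < N := by exact_mod_cast hN
  have hp0 : (0 : ℝ) < p := by exact_mod_cast hp
  have hch : (0 : ℝ) < (N.choose p : ℝ) := by exact_mod_cast Nat.choose_pos hpN
  have hNp0 : (0 : ℝ) < (N : ℝ) ^ p := by positivity
  set xb : EuclideanSpace ℝ (Fin d) := (N : ℝ)⁻¹ • (∑ i, x i) with hxb_def
  have hS : ∑ i, ‖x i‖ ^ 8 ≤ (N : ℝ) := by
    rw [one_div, inv_mul_le_iff₀ hN0, mul_one] at hx
    exact hx
  have hxb : ‖xb‖ ≤ 2 := by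
    have h1 : ‖xb‖ ≤ (N : ℝ)⁻¹ * ∑ i, ‖x i‖ := by
      rw [hxb_def, norm_smul, Real.norm_eq_abs, abs_of_nonneg (by positivity)]
      exact mul_le_mul_of_nonneg_left (norm_sum_le _ _) (by positivity)
    have h2 : ∑ i, ‖x i‖ ≤ ∑ i, (1 + ‖x i‖ ^ 8) :=
      Finset.sum_le_sum fun i _ => le_one_add_pow8 _ (norm_nonneg _)
    have h3 : ∑ i : Fin N, (1 + ‖x i‖ ^ 8) = N + ∑ i, ‖x i‖ ^ 8 := by
      rw [Finset.sum_add_distrib, Finset.sum_const, Finset.card_univ, Fintype.card_fin,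
        nsmul_eq_mul, mul_one]
    have h4 : ∑ i, ‖x i‖ ≤ 2 * N := by
      rw [h3] at h2
      linarith
    calc ‖xb‖ ≤ (N : ℝ)⁻¹ * ∑ i, ‖x i‖ := h1
      _ ≤ (N : ℝ)⁻¹ * (2 * N) := mul_le_mul_of_nonneg_left h4 (by positivity)
      _ = 2 := by field_simp
  set y : Fin N → EuclideanSpace ℝ (Fin d) := fun i => x i - xb with hy_def
  have hy0 : ∑ i, y i = 0 := by
    rw [hy_def]
    rw [Finset.sum_sub_distrib, Finset.sum_const, Finset.card_univ, Fintype.card_fin]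
    rw [hxb_def, ← Nat.cast_smul_eq_nsmul ℝ, smul_smul, mul_inv_cancel₀ hN0.ne',
      one_smul, sub_self]
  have hym : ∑ i, ‖y i‖ ^ 8 ≤ 32896 * N := by
    have hterm : ∀ i, ‖y i‖ ^ 8 ≤ 2 ^ 7 * (‖x i‖ ^ 8 + 2 ^ 8) := by
      intro i
      have h1 : ‖y i‖ ≤ ‖x i‖ + 2 := by
        rw [hy_def]
        exact (norm_sub_le _ _).trans (by linarith)
      have h2 : ‖y i‖ ^ 8 ≤ (‖x i‖ + 2) ^ 8 := pow_le_pow_left₀ (norm_nonneg _) h1 8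
      have h3 := add_pow_le (norm_nonneg (x i)) (by norm_num : (0:ℝ) ≤ 2) 8
      calc ‖y i‖ ^ 8 ≤ (‖x i‖ + 2) ^ 8 := h2
        _ ≤ 2 ^ (8 - 1) * (‖x i‖ ^ 8 + 2 ^ 8) := h3
        _ = 2 ^ 7 * (‖x i‖ ^ 8 + 2 ^ 8) := by norm_num
    calc ∑ i, ‖y i‖ ^ 8 ≤ ∑ i, 2 ^ 7 * (‖x i‖ ^ 8 + 2 ^ 8) :=
          Finset.sum_le_sum fun i _ => hterm i
      _ = 2 ^ 7 * (∑ i, ‖x i‖ ^ 8) + 2 ^ 7 * 2 ^ 8 * N := by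
          rw [← Finset.mul_sum, Finset.sum_add_distrib, Finset.sum_const, Finset.card_univ,
            Fintype.card_fin, nsmul_eq_mul, mul_add]
          ring
      _ ≤ 2 ^ 7 * N + 2 ^ 7 * 2 ^ 8 * N := by nlinarith
      _ = 32896 * N := by ring
  have hpart2 := SWR.part2 hp y hy0 hym
  -- identify z j with scaled y-sums
  have hzy : ∀ j : (Fin p → Fin N), (p : ℝ)⁻¹ • (∑ k, x (j k)) - xb
      = (p : ℝ)⁻¹ • (∑ k, y (j k)) := by
    intro j
    rw [hy_def]
    rw [Finset.sum_sub_distrib, Finset.sum_const, Finset.card_univ, Fintype.card_fin, smul_sub]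
    congr 1
    rw [← Nat.cast_smul_eq_nsmul ℝ, smul_smul, inv_mul_cancel₀ hp0.ne', one_smul]
  have hfj : ∀ j : (Fin p → Fin N), ‖(p : ℝ)⁻¹ • (∑ k, x (j k)) - xb‖ ^ 8
      = ((p : ℝ)⁻¹) ^ 8 * ‖∑ k, y (j k)‖ ^ 8 := by
    intro j
    rw [hzy j, norm_smul, Real.norm_eq_abs, abs_of_nonneg (by positivity), mul_pow]
  set SJ : ℝ := ∑ j : (Fin p → Fin N), ‖(p : ℝ)⁻¹ • (∑ k, x (j k)) - xb‖ ^ 8 with hSJ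
  have hSJ_le : SJ ≤ C8 / (p : ℝ) ^ 4 * (N : ℝ) ^ p := by
    rw [hSJ, Finset.sum_congr rfl fun j _ => hfj j, ← Finset.mul_sum]
    calc ((p:ℝ)⁻¹) ^ 8 * ∑ j : (Fin p → Fin N), ‖∑ k, y (j k)‖ ^ 8
        ≤ ((p:ℝ)⁻¹) ^ 8 * (C8 * (p : ℝ) ^ 4 * (N : ℝ) ^ p) :=
          mul_le_mul_of_nonneg_left hpart2 (by positivity)
      _ = C8 / (p : ℝ) ^ 4 * (N : ℝ) ^ p := by
          field_simp
  -- per-θ Jensen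
  have hjen : ∀ θ ∈ Finset.powersetCard p (Finset.univ : Finset (Fin N)),
      SWR.P p θ * ‖(p : ℝ)⁻¹ • (∑ a ∈ θ, x a) - xb‖ ^ 8
        ≤ ∑ j : (Fin p → Fin N), SWR.w j θ * ‖(p : ℝ)⁻¹ • (∑ k, x (j k)) - xb‖ ^ 8 := by
    intro θ hθ
    have hθcard : #θ = p := Finset.mem_powersetCard_univ.mp hθ
    have hPpos : 0 < SWR.P p θ := by
      have hmul := SWR.choose_mul_P hpN hθ
      nlinarith
    apply SWR.jensen_step hpN hθ hPpos
    have hcen := SWR.center hp hθcard x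
    have hblock : ∑ j : (Fin p → Fin N), SWR.w j θ • ((p : ℝ)⁻¹ • (∑ k, x (j k)) - xb)
        = (p:ℝ)⁻¹ • (∑ j : (Fin p → Fin N), SWR.w j θ • (∑ k, x (j k)))
          - SWR.P p θ • xb := by
      calc ∑ j : (Fin p → Fin N), SWR.w j θ • ((p : ℝ)⁻¹ • (∑ k, x (j k)) - xb)
          = ∑ j : (Fin p → Fin N),
              ((p:ℝ)⁻¹ • (SWR.w j θ • (∑ k, x (j k))) - SWR.w j θ • xb) := by
            apply Finset.sum_congr rfl
            intro j _
            rw [smul_sub, smul_comm]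
        _ = (p:ℝ)⁻¹ • (∑ j : (Fin p → Fin N), SWR.w j θ • (∑ k, x (j k)))
            - (∑ j : (Fin p → Fin N), SWR.w j θ) • xb := by
            rw [Finset.sum_sub_distrib, Finset.smul_sum, Finset.sum_smul]
        _ = (p:ℝ)⁻¹ • (∑ j : (Fin p → Fin N), SWR.w j θ • (∑ k, x (j k)))
            - SWR.P p θ • xb := by rw [SWR.P]
    rw [hblock, hcen, smul_comm ((p:ℝ)⁻¹) (SWR.P p θ), ← smul_sub]
  -- assemble
  set ch : ℝ := (N.choose p : ℝ) with hch_def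
  set U : ℝ := ∑ θ ∈ Finset.powersetCard p (Finset.univ : Finset (Fin N)),
      ‖(p : ℝ)⁻¹ • (∑ i ∈ θ, x i) - (N : ℝ)⁻¹ • (∑ i, x i)‖ ^ 8 with hU_def
  have hUxb : U = ∑ θ ∈ Finset.powersetCard p (Finset.univ : Finset (Fin N)),
      ‖(p : ℝ)⁻¹ • (∑ a ∈ θ, x a) - xb‖ ^ 8 := by
    rw [hU_def]
  have hPval : ∀ θ ∈ Finset.powersetCard p (Finset.univ : Finset (Fin N)),
      SWR.P p θ = (N : ℝ) ^ p / ch := by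
    intro θ hθ
    have hm := SWR.choose_mul_P hpN hθ
    rw [eq_div_iff hch.ne']
    rw [hch_def]
    linarith [hm]
  have hsumθ : (N : ℝ) ^ p / ch * U ≤ SJ := by
    rw [hUxb, Finset.mul_sum]
    have step : ∀ θ ∈ Finset.powersetCard p (Finset.univ : Finset (Fin N)),
        (N : ℝ) ^ p / ch * ‖(p : ℝ)⁻¹ • (∑ a ∈ θ, x a) - xb‖ ^ 8
        ≤ ∑ j : (Fin p → Fin N), SWR.w j θ * ‖(p : ℝ)⁻¹ • (∑ k, x (j k)) - xb‖ ^ 8 := by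
      intro θ hθ
      rw [← hPval θ hθ]
      exact hjen θ hθ
    refine (Finset.sum_le_sum step).trans (le_of_eq ?_)
    rw [Finset.sum_comm, hSJ]
    apply Finset.sum_congr rfl
    intro j _
    rw [← Finset.sum_mul, SWR.wA hpN j, one_mul]
  have hUb : U ≤ C8 / (p : ℝ) ^ 4 * ch := by
    have h2 : (ch / (N:ℝ)^p) * ((N:ℝ)^p / ch * U) = U := by
      field_simp
    calc U = (ch / (N:ℝ)^p) * ((N:ℝ)^p / ch * U) := h2.symm
      _ ≤ (ch / (N:ℝ)^p) * SJ := mul_le_mul_of_nonneg_left hsumθ (by positivity)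
      _ ≤ (ch / (N:ℝ)^p) * (C8 / (p : ℝ) ^ 4 * (N:ℝ)^p) :=
          mul_le_mul_of_nonneg_left hSJ_le (by positivity)
      _ = C8 / (p : ℝ) ^ 4 * ch := by
          field_simp
  rw [div_le_div_iff₀ hch (by positivity)]
  calc U * (p:ℝ) ^ 4 ≤ (C8 / (p : ℝ) ^ 4 * ch) * (p:ℝ)^4 :=
        mul_le_mul_of_nonneg_right hUb (by positivity)
    _ = C8 * ch := by field_simp
end

section
/- There exists an absolute constant C > 0 such that the following holds. Let d, N ≥ 1 and 1 ≤ p ≤ N be integers, let σ > 0, and let U₁, …, U_N : ℝ^d → ℝ be differentiable with average U = (1/N)·Σ_{i=1}^N U_i. Assume ((1/N)·Σ_{i=1}^N ‖∇U_i(x) − ∇U(x)‖⁸)^{1/4} ≤ σ²·d for all x ∈ ℝ^d. Then for every x ∈ ℝ^d and θ a uniformly random p-element subset of {1,…,N}: (E_θ[‖(1/p)·Σ_{i∈θ} ∇U_i(x) − ∇U(x)‖⁸])^{1/4} ≤ C·σ²·d/p. -/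
section Aux

lemma keyB (a w t : ℝ) (ht : |t| ≤ a*w) :
    |2*t + w^2| ≤ 2*a*w + w^2 := by
  obtain ⟨h1, h2⟩ := abs_le.mp ht
  rw [abs_le]
  constructor <;> nlinarith [sq_nonneg w]

lemma key1 (a w t : ℝ) (ha : 0 ≤ a) (hw : 0 ≤ w) (ht : |t| ≤ a*w) :
    (a^2 + 2*t + w^2)^1 ≤ a^2 + 2*(1:ℝ)*a^0*t + 1*(w^2) := by
  norm_num

lemma key2 (a w t : ℝ) (ha : 0 ≤ a) (hw : 0 ≤ w) (ht : |t| ≤ a*w) :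
    (a^2 + 2*t + w^2)^2 ≤ a^4 + 2*(2:ℝ)*a^2*t + 16*(a^2*w^2 + w^4) := by
  obtain ⟨h1, h2⟩ := abs_le.mp ht
  nlinarith [sq_nonneg (a-w), mul_nonneg ha hw, sq_nonneg t, sq_nonneg w, sq_nonneg a,
    mul_nonneg (mul_nonneg ha hw) (sq_nonneg w), sq_nonneg (a*w - w^2), sq_nonneg (t - a*w),
    sq_nonneg (t + a*w)]

lemma key3 (a w t : ℝ) (ha : 0 ≤ a) (hw : 0 ≤ w) (ht : |t| ≤ a*w) :
    (a^2 + 2*t + w^2)^3 ≤ a^6 + 2*(3:ℝ)*a^4*t + 64*(a^4*w^2 + a^2*w^4 + w^6) := by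
  have hB := keyB a w t ht
  have h2 : (2*t + w^2)^2 ≤ (2*a*w + w^2)^2 := by
    rw [← sq_abs]; exact pow_le_pow_left₀ (abs_nonneg _) hB 2
  have h3 : (2*t + w^2)^3 ≤ (2*a*w + w^2)^3 := by
    calc (2*t + w^2)^3 ≤ |(2*t + w^2)^3| := le_abs_self _
    _ = |2*t + w^2|^3 := by rw [abs_pow]
    _ ≤ (2*a*w + w^2)^3 := pow_le_pow_left₀ (abs_nonneg _) hB 3
  nlinarith [mul_le_mul_of_nonneg_left h2 (sq_nonneg a), h3,
    mul_nonneg (mul_nonneg (sq_nonneg a) (sq_nonneg w)) (sq_nonneg (a-w)),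
    mul_nonneg (pow_nonneg hw 4) (sq_nonneg (a-w)),
    mul_nonneg (mul_nonneg (pow_nonneg ha 4) hw) hw,
    mul_nonneg (pow_nonneg ha 2) (pow_nonneg hw 4),
    mul_nonneg (pow_nonneg ha 4) (pow_nonneg hw 2),
    pow_nonneg hw 6]

lemma key4 (a w t : ℝ) (ha : 0 ≤ a) (hw : 0 ≤ w) (ht : |t| ≤ a*w) :
    (a^2 + 2*t + w^2)^4 ≤ a^8 + 2*(4:ℝ)*a^6*t + 256*(a^6*w^2 + a^4*w^4 + a^2*w^6 + w^8) := by
  have hB := keyB a w t ht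
  have h2 : (2*t + w^2)^2 ≤ (2*a*w + w^2)^2 := by
    rw [← sq_abs]; exact pow_le_pow_left₀ (abs_nonneg _) hB 2
  have h3 : (2*t + w^2)^3 ≤ (2*a*w + w^2)^3 := by
    calc (2*t + w^2)^3 ≤ |(2*t + w^2)^3| := le_abs_self _
    _ = |2*t + w^2|^3 := by rw [abs_pow]
    _ ≤ (2*a*w + w^2)^3 := pow_le_pow_left₀ (abs_nonneg _) hB 3
  have h4 : (2*t + w^2)^4 ≤ (2*a*w + w^2)^4 := by
    calc (2*t + w^2)^4 = |2*t + w^2|^4 := by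
          rw [← abs_pow, abs_of_nonneg (by positivity)]
    _ ≤ (2*a*w + w^2)^4 := pow_le_pow_left₀ (abs_nonneg _) hB 4
  nlinarith [mul_le_mul_of_nonneg_left h3 (sq_nonneg a),
    mul_le_mul_of_nonneg_left h2 (pow_nonneg (sq_nonneg a) 2), h4,
    mul_nonneg (mul_nonneg (pow_nonneg ha 4) (sq_nonneg w)) (sq_nonneg (a-w)),
    mul_nonneg (mul_nonneg (sq_nonneg a) (pow_nonneg hw 4)) (sq_nonneg (a-w)),
    mul_nonneg (pow_nonneg hw 6) (sq_nonneg (a-w)),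
    mul_nonneg (mul_nonneg (pow_nonneg ha 6) hw) hw,
    mul_nonneg (pow_nonneg ha 4) (pow_nonneg hw 4),
    mul_nonneg (pow_nonneg ha 2) (pow_nonneg hw 6),
    mul_nonneg (pow_nonneg ha 6) (pow_nonneg hw 2),
    pow_nonneg hw 8]

open Finset in
lemma sum_pC_succ {α : Type*} [Fintype α] [DecidableEq α] (p : ℕ) (f : Finset α → ℝ) :
    ((p:ℝ)+1) * ∑ θ ∈ powersetCard (p+1) (univ : Finset α), f θ
      = ∑ η ∈ powersetCard p (univ : Finset α), ∑ j ∈ ηᶜ, f (insert j η) := by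
  have h1 : ∀ θ ∈ powersetCard (p+1) (univ : Finset α), ((p:ℝ)+1) * f θ = ∑ _j ∈ θ, f θ := by
    intro θ hθ
    rw [Finset.sum_const, (Finset.mem_powersetCard.mp hθ).2]
    push_cast [nsmul_eq_mul]
    ring
  have e1 := Finset.sum_sigma (Finset.powersetCard (p+1) (Finset.univ : Finset α)) (fun θ => θ)
    (fun x => f x.1)
  have e2 := Finset.sum_sigma (Finset.powersetCard p (Finset.univ : Finset α)) (fun η => ηᶜ)
    (fun x => f (insert x.2 x.1))
  rw [Finset.mul_sum, Finset.sum_congr rfl h1, ← e1, ← e2]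
  refine Finset.sum_nbij' (fun x => ⟨x.1.erase x.2, x.2⟩) (fun x => ⟨insert x.2 x.1, x.2⟩)
    ?_ ?_ ?_ ?_ ?_
  · rintro ⟨θ, j⟩ hx
    simp only [Finset.mem_sigma, Finset.mem_powersetCard] at *
    obtain ⟨⟨hsub, hcard⟩, hj⟩ := hx
    refine ⟨⟨Finset.subset_univ _, ?_⟩, ?_⟩
    · rw [Finset.card_erase_of_mem hj, hcard]; omega
    · simp [Finset.mem_compl]
  · rintro ⟨η, j⟩ hx
    simp only [Finset.mem_sigma, Finset.mem_powersetCard, Finset.mem_compl] at *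
    obtain ⟨⟨hsub, hcard⟩, hj⟩ := hx
    exact ⟨⟨Finset.subset_univ _, by rw [Finset.card_insert_of_notMem hj, hcard]⟩,
      Finset.mem_insert_self _ _⟩
  · rintro ⟨θ, j⟩ hx
    simp only [Finset.mem_sigma, Finset.mem_powersetCard] at hx
    simp [Finset.insert_erase hx.2]
  · rintro ⟨η, j⟩ hx
    simp only [Finset.mem_sigma, Finset.mem_powersetCard, Finset.mem_compl] at hx
    simp [Finset.erase_insert hx.2]
  · rintro ⟨θ, j⟩ hx
    simp only [Finset.mem_sigma, Finset.mem_powersetCard] at hx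
    simp [Finset.insert_erase hx.2]

open Finset RealInnerProductSpace in
lemma Tstep {E : Type*} [NormedAddCommGroup E] [InnerProductSpace ℝ E]
    {N : ℕ} (p : ℕ) (Z : Fin N → E) (hZ : ∑ i, Z i = 0)
    (k : ℕ) (hk : 1 ≤ k) (Q : ℝ → ℝ → ℝ)
    (key : ∀ a w t : ℝ, 0 ≤ a → 0 ≤ w → |t| ≤ a*w →
      (a^2+2*t+w^2)^k ≤ a^(2*k) + 2*(k:ℝ)*a^(2*k-2)*t + Q a w) :
    ((p:ℝ)+1) * ∑ θ ∈ powersetCard (p+1) (univ : Finset (Fin N)), ‖∑ i ∈ θ, Z i‖^(2*k)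
      ≤ ∑ η ∈ powersetCard p (univ : Finset (Fin N)),
          (((N:ℝ)-(p:ℝ)) * ‖∑ i ∈ η, Z i‖^(2*k) + ∑ j ∈ ηᶜ, Q ‖∑ i ∈ η, Z i‖ ‖Z j‖) := by
  rw [sum_pC_succ p (fun θ => ‖∑ i ∈ θ, Z i‖^(2*k))]
  apply Finset.sum_le_sum
  intro η hη
  obtain ⟨hsub, hcard⟩ := Finset.mem_powersetCard.mp hη
  have hpN : p ≤ N := by
    rw [← hcard]
    simpa using Finset.card_le_univ η
  set S := ∑ i ∈ η, Z i with hS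
  have hcompl : ∑ j ∈ ηᶜ, Z j = -S := by
    have h := Finset.sum_add_sum_compl η Z
    rw [hZ] at h
    exact eq_neg_of_add_eq_zero_right h
  have hinner : (∑ j ∈ ηᶜ, (inner ℝ S (Z j) : ℝ)) = -(‖S‖^2) := by
    rw [← inner_sum, hcompl, inner_neg_right, real_inner_self_eq_norm_sq]
  have hcardc : ((ηᶜ.card : ℕ) : ℝ) = (N:ℝ) - (p:ℝ) := by
    rw [Finset.card_compl, hcard]
    simp only [Fintype.card_fin]
    push_cast [Nat.cast_sub hpN]
    ring
  calc ∑ j ∈ ηᶜ, ‖∑ i ∈ insert j η, Z i‖^(2*k)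
      = ∑ j ∈ ηᶜ, (‖S‖^2 + 2*(inner ℝ S (Z j) : ℝ) + ‖Z j‖^2)^k := by
        apply Finset.sum_congr rfl
        intro j hj
        rw [Finset.sum_insert (Finset.mem_compl.mp hj), add_comm (Z j), pow_mul,
          norm_add_sq_real]
    _ ≤ ∑ j ∈ ηᶜ, (‖S‖^(2*k) + 2*(k:ℝ)*‖S‖^(2*k-2)*(inner ℝ S (Z j) : ℝ) + Q ‖S‖ ‖Z j‖) := by
        apply Finset.sum_le_sum
        intro j hj
        exact key _ _ _ (norm_nonneg _) (norm_nonneg _) (abs_real_inner_le_norm _ _)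
    _ = (ηᶜ.card : ℝ)*‖S‖^(2*k) + 2*(k:ℝ)*‖S‖^(2*k-2)*(∑ j ∈ ηᶜ, (inner ℝ S (Z j) : ℝ))
          + ∑ j ∈ ηᶜ, Q ‖S‖ ‖Z j‖ := by
        rw [Finset.sum_add_distrib, Finset.sum_add_distrib, Finset.sum_const, nsmul_eq_mul,
          ← Finset.mul_sum]
    _ ≤ ((N:ℝ)-(p:ℝ)) * ‖S‖^(2*k) + ∑ j ∈ ηᶜ, Q ‖S‖ ‖Z j‖ := by
        rw [hinner, hcardc]
        have h1 : 2*(k:ℝ)*‖S‖^(2*k-2)*(-(‖S‖^2)) ≤ 0 := by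
          have : (0:ℝ) ≤ 2*(k:ℝ)*‖S‖^(2*k-2)*(‖S‖^2) := by positivity
          linarith
        linarith

end Aux

section Moments

open Finset

variable {E : Type*} [NormedAddCommGroup E] [InnerProductSpace ℝ E] {N : ℕ}

lemma step2 (p k : ℕ) (hk : 1 ≤ k) (hpN : 2*p ≤ N) (Z : Fin N → E) (hZ : ∑ i, Z i = 0)
    (Q : ℝ → ℝ → ℝ)
    (key : ∀ a w t : ℝ, 0 ≤ a → 0 ≤ w → |t| ≤ a*w →
      (a^2+2*t+w^2)^k ≤ a^(2*k) + 2*(k:ℝ)*a^(2*k-2)*t + Q a w)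
    (G : Finset (Fin N) → ℝ)
    (hQb : ∀ η ∈ powersetCard p (univ : Finset (Fin N)),
      (∑ j ∈ ηᶜ, Q ‖∑ i ∈ η, Z i‖ ‖Z j‖) ≤ (N:ℝ) * G η)
    (B D : ℝ) (hD0 : 0 ≤ D)
    (hB : (∑ η ∈ powersetCard p (univ : Finset (Fin N)), ‖∑ i ∈ η, Z i‖^(2*k)) ≤ B * (N.choose p))
    (hD : (∑ η ∈ powersetCard p (univ : Finset (Fin N)), G η) ≤ D * (N.choose p)) :
    (∑ θ ∈ powersetCard (p+1) (univ : Finset (Fin N)), ‖∑ i ∈ θ, Z i‖^(2*k))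
      ≤ (B + 2*D) * (N.choose (p+1)) := by
  have hpN' : p ≤ N := by omega
  have hch : ((N:ℝ) - (p:ℝ)) * (N.choose p : ℝ) = ((p:ℝ)+1) * (N.choose (p+1) : ℝ) := by
    have h := Nat.choose_succ_right_eq N p
    have : ((N.choose (p+1) * (p+1) : ℕ) : ℝ) = ((N.choose p * (N - p) : ℕ) : ℝ) := by rw [h]
    push_cast [Nat.cast_sub hpN'] at this
    linarith
  have hNx : (N:ℝ) ≤ 2*((N:ℝ) - (p:ℝ)) := by
    have : ((2*p : ℕ) : ℝ) ≤ (N:ℝ) := by exact_mod_cast hpN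
    push_cast at this
    linarith
  have hχ0 : (0:ℝ) ≤ (N.choose p : ℝ) := by positivity
  have hNp0 : (0:ℝ) ≤ (N:ℝ) - (p:ℝ) := by
    have : ((p : ℕ) : ℝ) ≤ (N:ℝ) := by exact_mod_cast hpN'
    linarith
  have main : ((p:ℝ)+1) * ∑ θ ∈ powersetCard (p+1) (univ : Finset (Fin N)), ‖∑ i ∈ θ, Z i‖^(2*k)
      ≤ ((p:ℝ)+1) * ((B + 2*D) * (N.choose (p+1))) := by
    calc ((p:ℝ)+1) * ∑ θ ∈ powersetCard (p+1) (univ : Finset (Fin N)), ‖∑ i ∈ θ, Z i‖^(2*k)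
        ≤ ∑ η ∈ powersetCard p (univ : Finset (Fin N)),
            (((N:ℝ)-(p:ℝ)) * ‖∑ i ∈ η, Z i‖^(2*k) + ∑ j ∈ ηᶜ, Q ‖∑ i ∈ η, Z i‖ ‖Z j‖) :=
          Tstep p Z hZ k hk Q key
      _ ≤ ∑ η ∈ powersetCard p (univ : Finset (Fin N)),
            (((N:ℝ)-(p:ℝ)) * ‖∑ i ∈ η, Z i‖^(2*k) + (N:ℝ) * G η) := by
          apply Finset.sum_le_sum
          intro η hη
          exact add_le_add (le_refl _) (hQb η hη)
      _ = ((N:ℝ)-(p:ℝ)) * (∑ η ∈ powersetCard p (univ : Finset (Fin N)), ‖∑ i ∈ η, Z i‖^(2*k))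
            + (N:ℝ) * (∑ η ∈ powersetCard p (univ : Finset (Fin N)), G η) := by
          rw [Finset.sum_add_distrib, ← Finset.mul_sum, ← Finset.mul_sum]
      _ ≤ ((N:ℝ)-(p:ℝ)) * (B * (N.choose p)) + (N:ℝ) * (D * (N.choose p)) := by
          have h1 := mul_le_mul_of_nonneg_left hB hNp0
          have h2 := mul_le_mul_of_nonneg_left hD (by positivity : (0:ℝ) ≤ (N:ℝ))
          linarith
      _ ≤ ((N:ℝ)-(p:ℝ)) * (B * (N.choose p)) + 2*((N:ℝ)-(p:ℝ)) * (D * (N.choose p)) := by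
          have hDχ : (0:ℝ) ≤ D * (N.choose p) := mul_nonneg hD0 hχ0
          nlinarith
      _ = ((p:ℝ)+1) * ((B + 2*D) * (N.choose (p+1))) := by
          have e1 : ((N:ℝ)-(p:ℝ)) * (B * (N.choose p))
              = B * (((N:ℝ)-(p:ℝ)) * (N.choose p)) := by ring
          have e2 : 2*((N:ℝ)-(p:ℝ)) * (D * (N.choose p))
              = 2*D * (((N:ℝ)-(p:ℝ)) * (N.choose p)) := by ring
          rw [e1, e2, hch]
          ring
  have hp1 : (0:ℝ) < (p:ℝ)+1 := by positivity
  exact le_of_mul_le_mul_left main hp1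

end Moments

section MomentBound

open Finset

variable {E : Type*} [NormedAddCommGroup E] [InnerProductSpace ℝ E] {N : ℕ}

set_option maxHeartbeats 1000000 in
lemma moment_bound (Z : Fin N → E) (hZ : ∑ i, Z i = 0) (m : ℝ) (hm : 0 ≤ m)
    (h8 : (∑ i, ‖Z i‖^8) ≤ (N:ℝ) * m^4) :
    ∀ p : ℕ, 2*p ≤ N + 2 →
      ((∑ θ ∈ powersetCard p (univ : Finset (Fin N)), ‖∑ i ∈ θ, Z i‖^(2*1))
          ≤ (2*(p:ℝ)^1*m^1) * (N.choose p)) ∧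
      ((∑ θ ∈ powersetCard p (univ : Finset (Fin N)), ‖∑ i ∈ θ, Z i‖^(2*2))
          ≤ (32*(p:ℝ)^2*m^2) * (N.choose p)) ∧
      ((∑ θ ∈ powersetCard p (univ : Finset (Fin N)), ‖∑ i ∈ θ, Z i‖^(2*3))
          ≤ (2048*(p:ℝ)^3*m^3) * (N.choose p)) ∧
      ((∑ θ ∈ powersetCard p (univ : Finset (Fin N)), ‖∑ i ∈ θ, Z i‖^(2*4))
          ≤ (1048576*(p:ℝ)^4*m^4) * (N.choose p)) := by
  have hnn : ∀ (b : ℕ), (0:ℝ) ≤ ∑ i, ‖Z i‖^b := fun b => sum_nonneg (fun i _ => by positivity)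
  have hNnn : (0:ℝ) ≤ (N:ℝ) := by positivity
  have hW2 : (∑ i, ‖Z i‖^4) ≤ (N:ℝ)*m^2 := by
    refine (pow_le_pow_iff_left₀ (hnn 4) (by positivity) two_ne_zero).mp ?_
    calc (∑ i, ‖Z i‖^4)^2 ≤ (N:ℝ) * ∑ i, (‖Z i‖^4)^2 := by
          have h := sq_sum_le_card_mul_sum_sq (s := (univ : Finset (Fin N)))
            (f := fun i => ‖Z i‖^4)
          simpa using h
      _ = (N:ℝ) * ∑ i, ‖Z i‖^8 := by
          congr 1
          exact Finset.sum_congr rfl (fun i _ => by ring)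
      _ ≤ (N:ℝ) * ((N:ℝ)*m^4) := mul_le_mul_of_nonneg_left h8 hNnn
      _ = ((N:ℝ)*m^2)^2 := by ring
  have hW1 : (∑ i, ‖Z i‖^2) ≤ (N:ℝ)*m := by
    refine (pow_le_pow_iff_left₀ (hnn 2) (by positivity) two_ne_zero).mp ?_
    calc (∑ i, ‖Z i‖^2)^2 ≤ (N:ℝ) * ∑ i, (‖Z i‖^2)^2 := by
          have h := sq_sum_le_card_mul_sum_sq (s := (univ : Finset (Fin N)))
            (f := fun i => ‖Z i‖^2)
          simpa using h
      _ = (N:ℝ) * ∑ i, ‖Z i‖^4 := by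
          congr 1
          exact Finset.sum_congr rfl (fun i _ => by ring)
      _ ≤ (N:ℝ) * ((N:ℝ)*m^2) := mul_le_mul_of_nonneg_left hW2 hNnn
      _ = ((N:ℝ)*m)^2 := by ring
  have hW3 : (∑ i, ‖Z i‖^6) ≤ (N:ℝ)*m^3 := by
    refine (pow_le_pow_iff_left₀ (hnn 6) (by positivity) two_ne_zero).mp ?_
    calc (∑ i, ‖Z i‖^6)^2 = (∑ i, ‖Z i‖^2 * ‖Z i‖^4)^2 := by
          congr 1
          exact Finset.sum_congr rfl (fun i _ => by ring)
      _ ≤ (∑ i, (‖Z i‖^2)^2) * (∑ i, (‖Z i‖^4)^2) :=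
          Finset.sum_mul_sq_le_sq_mul_sq _ _ _
      _ = (∑ i, ‖Z i‖^4) * (∑ i, ‖Z i‖^8) := by
          congr 1
          · exact Finset.sum_congr rfl (fun i _ => by ring)
          · exact Finset.sum_congr rfl (fun i _ => by ring)
      _ ≤ ((N:ℝ)*m^2) * ((N:ℝ)*m^4) := by
          apply mul_le_mul hW2 h8 (hnn 8) (by positivity)
      _ = ((N:ℝ)*m^3)^2 := by ring
  have hsubc : ∀ (η : Finset (Fin N)) (b : ℕ), (∑ j ∈ ηᶜ, ‖Z j‖^b) ≤ ∑ j, ‖Z j‖^b := by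
    intro η b
    exact Finset.sum_le_sum_of_subset_of_nonneg (Finset.subset_univ _)
      (fun i _ _ => by positivity)
  intro p
  induction p with
  | zero =>
    intro _
    norm_num [Finset.powersetCard_zero]
  | succ p ih =>
    intro hp2
    have hpN : 2*p ≤ N := by omega
    obtain ⟨ih2, ih4, ih6, ih8⟩ := ih (by omega)
    have hχ0 : (0:ℝ) ≤ (N.choose p : ℝ) := by positivity
    have hχ'0 : (0:ℝ) ≤ (N.choose (p+1) : ℝ) := by positivity
    have hp0 : (0:ℝ) ≤ (p:ℝ) := by positivity
    -- k = 1
    have b2 := step2 (E := E) p 1 le_rfl hpN Z hZ (fun a w => 1*(w^2))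
      (by
        intro a w t ha hw ht
        have h := key1 a w t ha hw ht
        norm_num at h ⊢ <;> linarith)
      (fun _ => m)
      (by
        intro η hη
        beta_reduce
        have h1 := (hsubc η 2).trans hW1
        simpa using h1)
      (2*(p:ℝ)^1*m^1) m hm ih2
      (by
        rw [Finset.sum_const, nsmul_eq_mul, Finset.card_powersetCard]
        simp only [Finset.card_univ, Fintype.card_fin]
        rw [mul_comm])
    have g2 : (∑ θ ∈ powersetCard (p+1) (univ : Finset (Fin N)), ‖∑ i ∈ θ, Z i‖^(2*1))
        ≤ (2*((p:ℕ)+1:ℝ)^1*m^1) * (N.choose (p+1)) := by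
      calc _ ≤ (2*(p:ℝ)^1*m^1 + 2*m) * (N.choose (p+1)) := b2
        _ = (2*((p:ℕ)+1:ℝ)^1*m^1) * (N.choose (p+1)) := by push_cast; ring
    -- k = 2
    have b4 := step2 (E := E) p 2 (by norm_num) hpN Z hZ (fun a w => 16*(a^2*w^2 + w^4))
      (by
        intro a w t ha hw ht
        have h := key2 a w t ha hw ht
        norm_num at h ⊢ <;> linarith)
      (fun η => 16*(m*‖∑ i ∈ η, Z i‖^2 + m^2))
      (by
        intro η hη
        beta_reduce
        have h1 := (hsubc η 2).trans hW1
        have h2 := (hsubc η 4).trans hW2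
        have ha2 : (0:ℝ) ≤ ‖∑ i ∈ η, Z i‖^2 := by positivity
        have e : (∑ j ∈ ηᶜ, 16*(‖∑ i ∈ η, Z i‖^2*‖Z j‖^2 + ‖Z j‖^4))
            = 16*(‖∑ i ∈ η, Z i‖^2*(∑ j ∈ ηᶜ, ‖Z j‖^2) + (∑ j ∈ ηᶜ, ‖Z j‖^4)) := by
          rw [← Finset.mul_sum]
          congr 1
          rw [Finset.sum_add_distrib, ← Finset.mul_sum]
        rw [e]
        nlinarith [mul_le_mul_of_nonneg_left h1 ha2])
      (32*(p:ℝ)^2*m^2) (16*(m*(2*(p:ℝ)^1*m^1) + m^2))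
      (by positivity) ih4
      (by
        have e : (∑ η ∈ powersetCard p (univ : Finset (Fin N)),
              (16*(m*‖∑ i ∈ η, Z i‖^2 + m^2)))
            = 16*(m*(∑ η ∈ powersetCard p (univ : Finset (Fin N)), ‖∑ i ∈ η, Z i‖^2)
                + m^2*(N.choose p)) := by
          rw [← Finset.mul_sum]
          congr 1
          rw [Finset.sum_add_distrib, ← Finset.mul_sum, Finset.sum_const, nsmul_eq_mul,
            Finset.card_powersetCard]
          simp only [Finset.card_univ, Fintype.card_fin]
          ring
        rw [e]
        have hih2 := mul_le_mul_of_nonneg_left ih2 hm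
        nlinarith [hih2])
    have g4 : (∑ θ ∈ powersetCard (p+1) (univ : Finset (Fin N)), ‖∑ i ∈ θ, Z i‖^(2*2))
        ≤ (32*((p:ℕ)+1:ℝ)^2*m^2) * (N.choose (p+1)) := by
      calc _ ≤ _ := b4
        _ ≤ (32*((p:ℕ)+1:ℝ)^2*m^2) * (N.choose (p+1)) := by
          apply mul_le_mul_of_nonneg_right ?_ hχ'0
          push_cast
          nlinarith [pow_nonneg hm 2]
    -- k = 3
    have b6 := step2 (E := E) p 3 (by norm_num) hpN Z hZ
      (fun a w => 64*(a^4*w^2 + a^2*w^4 + w^6))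
      (by
        intro a w t ha hw ht
        have h := key3 a w t ha hw ht
        norm_num at h ⊢ <;> linarith)
      (fun η => 64*(m*‖∑ i ∈ η, Z i‖^4 + m^2*‖∑ i ∈ η, Z i‖^2 + m^3))
      (by
        intro η hη
        beta_reduce
        have h1 := (hsubc η 2).trans hW1
        have h2 := (hsubc η 4).trans hW2
        have h3 := (hsubc η 6).trans hW3
        have ha2 : (0:ℝ) ≤ ‖∑ i ∈ η, Z i‖^2 := by positivity
        have ha4 : (0:ℝ) ≤ ‖∑ i ∈ η, Z i‖^4 := by positivity
        have e : (∑ j ∈ ηᶜ, 64*(‖∑ i ∈ η, Z i‖^4*‖Z j‖^2 + ‖∑ i ∈ η, Z i‖^2*‖Z j‖^4 + ‖Z j‖^6))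
            = 64*(‖∑ i ∈ η, Z i‖^4*(∑ j ∈ ηᶜ, ‖Z j‖^2)
                + ‖∑ i ∈ η, Z i‖^2*(∑ j ∈ ηᶜ, ‖Z j‖^4) + (∑ j ∈ ηᶜ, ‖Z j‖^6)) := by
          rw [← Finset.mul_sum]
          congr 1
          rw [Finset.sum_add_distrib, Finset.sum_add_distrib, ← Finset.mul_sum, ← Finset.mul_sum]
        rw [e]
        nlinarith [mul_le_mul_of_nonneg_left h1 ha4, mul_le_mul_of_nonneg_left h2 ha2])
      (2048*(p:ℝ)^3*m^3)
      (64*(m*(32*(p:ℝ)^2*m^2) + m^2*(2*(p:ℝ)^1*m^1) + m^3))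
      (by positivity) ih6
      (by
        have e : (∑ η ∈ powersetCard p (univ : Finset (Fin N)),
              (64*(m*‖∑ i ∈ η, Z i‖^4 + m^2*‖∑ i ∈ η, Z i‖^2 + m^3)))
            = 64*(m*(∑ η ∈ powersetCard p (univ : Finset (Fin N)), ‖∑ i ∈ η, Z i‖^4)
                + m^2*(∑ η ∈ powersetCard p (univ : Finset (Fin N)), ‖∑ i ∈ η, Z i‖^2)
                + m^3*(N.choose p)) := by
          rw [← Finset.mul_sum]
          congr 1
          rw [Finset.sum_add_distrib, Finset.sum_add_distrib, ← Finset.mul_sum, ← Finset.mul_sum,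
            Finset.sum_const, nsmul_eq_mul, Finset.card_powersetCard]
          simp only [Finset.card_univ, Fintype.card_fin]
          ring
        rw [e]
        have hih4 := mul_le_mul_of_nonneg_left ih4 hm
        have hih2 := mul_le_mul_of_nonneg_left ih2 (pow_nonneg hm 2)
        nlinarith [hih4, hih2])
    have g6 : (∑ θ ∈ powersetCard (p+1) (univ : Finset (Fin N)), ‖∑ i ∈ θ, Z i‖^(2*3))
        ≤ (2048*((p:ℕ)+1:ℝ)^3*m^3) * (N.choose (p+1)) := by
      calc _ ≤ _ := b6
        _ ≤ (2048*((p:ℕ)+1:ℝ)^3*m^3) * (N.choose (p+1)) := by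
          apply mul_le_mul_of_nonneg_right ?_ hχ'0
          push_cast
          nlinarith [pow_nonneg hm 3, mul_nonneg (mul_nonneg hp0 hp0) (pow_nonneg hm 3),
            mul_nonneg hp0 (pow_nonneg hm 3)]
    -- k = 4
    have b8 := step2 (E := E) p 4 (by norm_num) hpN Z hZ
      (fun a w => 256*(a^6*w^2 + a^4*w^4 + a^2*w^6 + w^8))
      (by
        intro a w t ha hw ht
        have h := key4 a w t ha hw ht
        norm_num at h ⊢ <;> linarith)
      (fun η => 256*(m*‖∑ i ∈ η, Z i‖^6 + m^2*‖∑ i ∈ η, Z i‖^4 + m^3*‖∑ i ∈ η, Z i‖^2 + m^4))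
      (by
        intro η hη
        beta_reduce
        have h1 := (hsubc η 2).trans hW1
        have h2 := (hsubc η 4).trans hW2
        have h3 := (hsubc η 6).trans hW3
        have h4 := (hsubc η 8).trans h8
        have ha2 : (0:ℝ) ≤ ‖∑ i ∈ η, Z i‖^2 := by positivity
        have ha4 : (0:ℝ) ≤ ‖∑ i ∈ η, Z i‖^4 := by positivity
        have ha6 : (0:ℝ) ≤ ‖∑ i ∈ η, Z i‖^6 := by positivity
        have e : (∑ j ∈ ηᶜ, 256*(‖∑ i ∈ η, Z i‖^6*‖Z j‖^2 + ‖∑ i ∈ η, Z i‖^4*‖Z j‖^4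
              + ‖∑ i ∈ η, Z i‖^2*‖Z j‖^6 + ‖Z j‖^8))
            = 256*(‖∑ i ∈ η, Z i‖^6*(∑ j ∈ ηᶜ, ‖Z j‖^2)
                + ‖∑ i ∈ η, Z i‖^4*(∑ j ∈ ηᶜ, ‖Z j‖^4)
                + ‖∑ i ∈ η, Z i‖^2*(∑ j ∈ ηᶜ, ‖Z j‖^6) + (∑ j ∈ ηᶜ, ‖Z j‖^8)) := by
          rw [← Finset.mul_sum]
          congr 1
          rw [Finset.sum_add_distrib, Finset.sum_add_distrib, Finset.sum_add_distrib,
            ← Finset.mul_sum, ← Finset.mul_sum, ← Finset.mul_sum]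
        rw [e]
        nlinarith [mul_le_mul_of_nonneg_left h1 ha6, mul_le_mul_of_nonneg_left h2 ha4,
          mul_le_mul_of_nonneg_left h3 ha2])
      (1048576*(p:ℝ)^4*m^4)
      (256*(m*(2048*(p:ℝ)^3*m^3) + m^2*(32*(p:ℝ)^2*m^2) + m^3*(2*(p:ℝ)^1*m^1) + m^4))
      (by positivity) ih8
      (by
        have e : (∑ η ∈ powersetCard p (univ : Finset (Fin N)),
              (256*(m*‖∑ i ∈ η, Z i‖^6 + m^2*‖∑ i ∈ η, Z i‖^4 + m^3*‖∑ i ∈ η, Z i‖^2 + m^4)))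
            = 256*(m*(∑ η ∈ powersetCard p (univ : Finset (Fin N)), ‖∑ i ∈ η, Z i‖^6)
                + m^2*(∑ η ∈ powersetCard p (univ : Finset (Fin N)), ‖∑ i ∈ η, Z i‖^4)
                + m^3*(∑ η ∈ powersetCard p (univ : Finset (Fin N)), ‖∑ i ∈ η, Z i‖^2)
                + m^4*(N.choose p)) := by
          rw [← Finset.mul_sum]
          congr 1
          rw [Finset.sum_add_distrib, Finset.sum_add_distrib, Finset.sum_add_distrib,
            ← Finset.mul_sum, ← Finset.mul_sum, ← Finset.mul_sum,
            Finset.sum_const, nsmul_eq_mul, Finset.card_powersetCard]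
          simp only [Finset.card_univ, Fintype.card_fin]
          ring
        rw [e]
        have hih6 := mul_le_mul_of_nonneg_left ih6 hm
        have hih4 := mul_le_mul_of_nonneg_left ih4 (pow_nonneg hm 2)
        have hih2 := mul_le_mul_of_nonneg_left ih2 (pow_nonneg hm 3)
        nlinarith [hih6, hih4, hih2])
    have g8 : (∑ θ ∈ powersetCard (p+1) (univ : Finset (Fin N)), ‖∑ i ∈ θ, Z i‖^(2*4))
        ≤ (1048576*((p:ℕ)+1:ℝ)^4*m^4) * (N.choose (p+1)) := by
      calc _ ≤ _ := b8
        _ ≤ (1048576*((p:ℕ)+1:ℝ)^4*m^4) * (N.choose (p+1)) := by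
          apply mul_le_mul_of_nonneg_right ?_ hχ'0
          push_cast
          nlinarith [pow_nonneg hm 4, mul_nonneg (mul_nonneg (mul_nonneg hp0 hp0) hp0)
            (pow_nonneg hm 4), mul_nonneg (mul_nonneg hp0 hp0) (pow_nonneg hm 4),
            mul_nonneg hp0 (pow_nonneg hm 4)]
    exact ⟨by exact_mod_cast g2, by exact_mod_cast g4, by exact_mod_cast g6, by exact_mod_cast g8⟩

end MomentBound

section Final

open Finset

variable {E : Type*} [NormedAddCommGroup E] [InnerProductSpace ℝ E] {N : ℕ}

lemma T_compl (Z : Fin N → E) (hZ : ∑ i, Z i = 0) (p : ℕ) (hpN : p ≤ N) :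
    (∑ θ ∈ powersetCard p (univ : Finset (Fin N)), ‖∑ i ∈ θ, Z i‖^8)
      = ∑ θ ∈ powersetCard (N-p) (univ : Finset (Fin N)), ‖∑ i ∈ θ, Z i‖^8 := by
  refine Finset.sum_nbij' (fun θ => θᶜ) (fun θ => θᶜ) ?_ ?_ ?_ ?_ ?_
  · intro θ hθ
    obtain ⟨hsub, hcard⟩ := Finset.mem_powersetCard.mp hθ
    refine Finset.mem_powersetCard.mpr ⟨Finset.subset_univ _, ?_⟩
    rw [Finset.card_compl, hcard, Fintype.card_fin]
  · intro θ hθ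
    obtain ⟨hsub, hcard⟩ := Finset.mem_powersetCard.mp hθ
    refine Finset.mem_powersetCard.mpr ⟨Finset.subset_univ _, ?_⟩
    rw [Finset.card_compl, hcard, Fintype.card_fin]
    omega
  · intro θ _; simp
  · intro θ _; simp
  · intro θ hθ
    have hc : ∑ i ∈ θᶜ, Z i = -∑ i ∈ θ, Z i := by
      have h := Finset.sum_add_sum_compl θ Z
      rw [hZ] at h
      exact eq_neg_of_add_eq_zero_right h
    rw [hc, norm_neg]

lemma moment8_all (Z : Fin N → E) (hZ : ∑ i, Z i = 0) (m : ℝ) (hm : 0 ≤ m)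
    (h8 : (∑ i, ‖Z i‖^8) ≤ (N:ℝ) * m^4) (p : ℕ) (hpN : p ≤ N) :
    (∑ θ ∈ powersetCard p (univ : Finset (Fin N)), ‖∑ i ∈ θ, Z i‖^8)
      ≤ (1048576*(p:ℝ)^4*m^4) * (N.choose p) := by
  by_cases hc : 2*p ≤ N+2
  · have h := (moment_bound Z hZ m hm h8 p hc).2.2.2
    norm_num at h ⊢
    exact h
  · have hq : 2*(N-p) ≤ N+2 := by omega
    have h := (moment_bound Z hZ m hm h8 (N-p) hq).2.2.2
    norm_num at h
    rw [T_compl Z hZ p hpN]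
    refine h.trans ?_
    rw [Nat.choose_symm hpN]
    apply mul_le_mul_of_nonneg_right ?_ (by positivity)
    have hqp : ((N - p : ℕ):ℝ) ≤ (p:ℝ) := by exact_mod_cast (by omega : N - p ≤ p)
    have hq0 : (0:ℝ) ≤ ((N-p : ℕ):ℝ) := by positivity
    have hpow := pow_le_pow_left₀ hq0 hqp 4
    nlinarith [pow_nonneg hm 4, pow_nonneg hq0 4]

end Final

section Gradient

lemma grad_avg {d N : ℕ} (U : Fin N → EuclideanSpace ℝ (Fin d) → ℝ)
    (hU : ∀ i, Differentiable ℝ (U i)) (y : EuclideanSpace ℝ (Fin d)) :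
    gradient (fun z => (1/(N:ℝ)) * ∑ j, U j z) y
      = (1/(N:ℝ)) • ∑ j, gradient (U j) y := by
  have hdiff : DifferentiableAt ℝ (fun z => ∑ j, U j z) y :=
    DifferentiableAt.fun_sum (fun i _ => (hU i).differentiableAt)
  unfold gradient
  rw [fderiv_const_mul hdiff, fderiv_fun_sum (fun i _ => (hU i).differentiableAt)]
  rw [map_smul, map_sum]

end Gradient

theorem stmt_8 : ∃ C : ℝ, 0 < C ∧ ∀ d N p : ℕ, 1 ≤ d → 1 ≤ N → 1 ≤ p → p ≤ N →
    ∀ σ : ℝ, 0 < σ →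
    ∀ U : Fin N → EuclideanSpace ℝ (Fin d) → ℝ,
    (∀ i, Differentiable ℝ (U i)) →
    (∀ y : EuclideanSpace ℝ (Fin d),
      ((1 / (N : ℝ)) * ∑ i,
          ‖gradient (U i) y - gradient (fun z => (1 / (N : ℝ)) * ∑ j, U j z) y‖ ^ 8) ^ ((1 : ℝ) / 4)
        ≤ σ ^ 2 * d) →
    ∀ x : EuclideanSpace ℝ (Fin d),
      ((∑ θ ∈ Finset.powersetCard p (Finset.univ : Finset (Fin N)),
          ‖(p : ℝ)⁻¹ • (∑ i ∈ θ, gradient (U i) x) -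
            gradient (fun z => (1 / (N : ℝ)) * ∑ j, U j z) x‖ ^ 8) / (N.choose p : ℝ)) ^ ((1 : ℝ) / 4)
        ≤ C * σ ^ 2 * d / p := by
  refine ⟨32, by norm_num, ?_⟩
  intro d N p hd hN hp hpN σ hσ U hdiff hmom x
  have hN0 : (N:ℝ) ≠ 0 := by
    have : (0:ℝ) < (N:ℝ) := by exact_mod_cast hN
    exact ne_of_gt this
  have hp0 : (0:ℝ) < (p:ℝ) := by exact_mod_cast hp
  set m : ℝ := σ^2*(d:ℝ) with hmdef
  have hm : 0 ≤ m := by positivity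
  set Zf : Fin N → EuclideanSpace ℝ (Fin d) :=
    fun i => gradient (U i) x - gradient (fun z => (1/(N:ℝ)) * ∑ j, U j z) x with hZdef
  have hsum0 : ∑ i, Zf i = 0 := by
    simp only [hZdef]
    rw [Finset.sum_sub_distrib, Finset.sum_const, Finset.card_univ, Fintype.card_fin]
    rw [grad_avg U hdiff x]
    rw [← Nat.cast_smul_eq_nsmul ℝ N, smul_smul]
    rw [mul_one_div_cancel hN0, one_smul, sub_self]
  have hZ8 : (∑ i, ‖Zf i‖^8) ≤ (N:ℝ)*m^4 := by
    have hA : ((1/(N:ℝ)) * ∑ i, ‖Zf i‖^8)^((1:ℝ)/4) ≤ σ^2*(d:ℝ) := hmom x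
    have hA0 : (0:ℝ) ≤ (1/(N:ℝ)) * ∑ i, ‖Zf i‖^8 := by positivity
    have h4 := pow_le_pow_left₀ (Real.rpow_nonneg hA0 _) hA 4
    have hid : (((1/(N:ℝ)) * ∑ i, ‖Zf i‖^8)^((1:ℝ)/4))^(4:ℕ)
        = (1/(N:ℝ)) * ∑ i, ‖Zf i‖^8 := by
      rw [← Real.rpow_natCast (((1/(N:ℝ)) * ∑ i, ‖Zf i‖^8)^((1:ℝ)/4)) 4,
        ← Real.rpow_mul hA0]
      norm_num
    rw [hid] at h4
    have heq : (∑ i, ‖Zf i‖^8) = (N:ℝ)*((1/(N:ℝ)) * ∑ i, ‖Zf i‖^8) := by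
      field_simp
    rw [heq, hmdef]
    exact mul_le_mul_of_nonneg_left h4 (by positivity)
  have hT := moment8_all Zf hsum0 m hm hZ8 p hpN
  have hper : ∀ θ ∈ Finset.powersetCard p (Finset.univ : Finset (Fin N)),
      ‖(p:ℝ)⁻¹ • (∑ i ∈ θ, gradient (U i) x)
          - gradient (fun z => (1/(N:ℝ)) * ∑ j, U j z) x‖^8
        = ((p:ℝ)⁻¹)^8 * ‖∑ i ∈ θ, Zf i‖^8 := by
    intro θ hθ
    have hcard := (Finset.mem_powersetCard.mp hθ).2
    have e : (p:ℝ)⁻¹ • (∑ i ∈ θ, gradient (U i) x)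
          - gradient (fun z => (1/(N:ℝ)) * ∑ j, U j z) x
        = (p:ℝ)⁻¹ • (∑ i ∈ θ, Zf i) := by
      simp only [hZdef]
      rw [Finset.sum_sub_distrib, Finset.sum_const, hcard, smul_sub]
      congr 1
      rw [← Nat.cast_smul_eq_nsmul ℝ p, smul_smul, inv_mul_cancel₀ (ne_of_gt hp0), one_smul]
    rw [e, norm_smul, mul_pow, Real.norm_eq_abs, abs_of_nonneg (by positivity)]
  have hsum : (∑ θ ∈ Finset.powersetCard p (Finset.univ : Finset (Fin N)),
        ‖(p:ℝ)⁻¹ • (∑ i ∈ θ, gradient (U i) x)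
          - gradient (fun z => (1/(N:ℝ)) * ∑ j, U j z) x‖^8)
      = ((p:ℝ)⁻¹)^8 * ∑ θ ∈ Finset.powersetCard p (Finset.univ : Finset (Fin N)),
          ‖∑ i ∈ θ, Zf i‖^8 := by
    rw [Finset.mul_sum]
    exact Finset.sum_congr rfl hper
  have hχpos : (0:ℝ) < (N.choose p : ℝ) := by exact_mod_cast Nat.choose_pos hpN
  have hquot : (∑ θ ∈ Finset.powersetCard p (Finset.univ : Finset (Fin N)),
        ‖(p:ℝ)⁻¹ • (∑ i ∈ θ, gradient (U i) x)
          - gradient (fun z => (1/(N:ℝ)) * ∑ j, U j z) x‖^8) / (N.choose p : ℝ)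
      ≤ 1048576*m^4/(p:ℝ)^4 := by
    rw [hsum, div_le_iff₀ hχpos]
    calc ((p:ℝ)⁻¹)^8 * ∑ θ ∈ Finset.powersetCard p (Finset.univ : Finset (Fin N)),
          ‖∑ i ∈ θ, Zf i‖^8
        ≤ ((p:ℝ)⁻¹)^8 * ((1048576*(p:ℝ)^4*m^4) * (N.choose p)) :=
          mul_le_mul_of_nonneg_left hT (by positivity)
      _ = 1048576*m^4/(p:ℝ)^4 * (N.choose p) := by
          field_simp
  have hL0 : (0:ℝ) ≤ (∑ θ ∈ Finset.powersetCard p (Finset.univ : Finset (Fin N)),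
        ‖(p:ℝ)⁻¹ • (∑ i ∈ θ, gradient (U i) x)
          - gradient (fun z => (1/(N:ℝ)) * ∑ j, U j z) x‖^8) / (N.choose p : ℝ) := by
    apply div_nonneg ?_ (le_of_lt hχpos)
    exact Finset.sum_nonneg (fun θ _ => by positivity)
  have hmono := Real.rpow_le_rpow hL0 hquot (by norm_num : (0:ℝ) ≤ 1/4)
  refine hmono.trans ?_
  have h32 : (0:ℝ) ≤ 32*m/(p:ℝ) := by positivity
  have he : 1048576*m^4/(p:ℝ)^4 = (32*m/(p:ℝ))^(4:ℕ) := by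
    field_simp
    ring
  rw [he]
  have hid2 : ((32*m/(p:ℝ))^(4:ℕ))^((1:ℝ)/4) = 32*m/(p:ℝ) := by
    rw [← Real.rpow_natCast (32*m/(p:ℝ)) 4, ← Real.rpow_mul h32]
    norm_num
  rw [hid2, hmdef]
  apply le_of_eq
  ring
end

section
/- There exists an absolute constant C > 0 such that the following holds. Let d, N ≥ 1 and 1 ≤ p ≤ N be integers, let σ > 0, and let U₁, …, U_N : ℝ^d → ℝ be twice continuously differentiable with average U = (1/N)·Σ_{i=1}^N U_i. Assume that for all y ∈ ℝ^d: (1/N)·Σ_{i=1}^N ‖∇U_i(y) − ∇U(y)‖⁸ ≤ (σ²·d)⁴ and (1/N)·Σ_{i=1}^N ‖∇²U_i(y) − ∇²U(y)‖⁸ ≤ σ⁸, where ‖·‖ on Hessians is the operator norm. Then for all x, x* ∈ ℝ^d and θ a uniformly random p-element subset of {1,…,N}, the SVRG gradient deviation g(θ) = (1/p)·Σ_{i∈θ} ∇U_i(x) − (1/p)·Σ_{i∈θ} ∇U_i(x*) + ∇U(x*) − ∇U(x) satisfies (E_θ[‖g(θ)‖⁸])^{1/4} ≤ (C·σ²/p)·min{d,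 ‖x − x*‖²}. -/
set_option maxHeartbeats 4000000

open Finset intervalIntegral





lemma pow8_add_le (x y : ℝ) (hx : 0 ≤ x) (hy : 0 ≤ y) : (x+y)^8 ≤ 128*(x^8+y^8) := by
  have h2 : (x+y)^2 ≤ 2*(x^2+y^2) := by nlinarith [sq_nonneg (x-y)]
  have h4 : (x+y)^4 ≤ 8*(x^4+y^4) := by
    nlinarith [sq_nonneg (x^2-y^2), pow_le_pow_left₀ (by positivity : (0:ℝ) ≤ (x+y)^2) h2 2]
  calc (x+y)^8 = ((x+y)^4)^2 := by ring
  _ ≤ (8*(x^4+y^4))^2 := by apply pow_le_pow_left₀ (by positivity) h4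
  _ ≤ 128*(x^8+y^8) := by nlinarith [sq_nonneg (x^4-y^4)]

lemma key_pointwise (s w B : ℝ) (hs : 0 ≤ s) (hw : 0 ≤ w) (hB1 : B ≤ 2*s*w) (hB2 : -(2*s*w) ≤ B) :
    (s^2+B+w^2)^4 ≤ s^8 + 4*s^6*B + 128*(s^6*w^2 + s^4*w^4 + s^2*w^6 + w^8) := by
  have hsq : B^2 ≤ 4*s^2*w^2 := by nlinarith
  have hB3 : B^3 ≤ 8*s^3*w^3 := by
    rcases le_or_gt 0 B with h | h
    · calc B^3 ≤ (2*s*w)^3 := pow_le_pow_left₀ h hB1 3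
      _ = 8*s^3*w^3 := by ring
    · nlinarith [sq_nonneg B, mul_nonneg (mul_nonneg hs hs) (mul_nonneg (mul_nonneg hs hw) (mul_nonneg hw hw))]
  have hB4 : B^4 ≤ 16*s^4*w^4 := by nlinarith [sq_nonneg (B^2 - 4*s^2*w^2), sq_nonneg B, mul_nonneg (mul_nonneg hs hs) (mul_nonneg hw hw)]
  have m1 : 2*s^5*w^3 ≤ s^6*w^2 + s^4*w^4 := by nlinarith [mul_nonneg (mul_nonneg (by positivity : (0:ℝ) ≤ s^4) (by positivity : (0:ℝ) ≤ w^2)) (sq_nonneg (s-w))]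
  have m2 : 2*s^3*w^5 ≤ s^4*w^4 + s^2*w^6 := by nlinarith [mul_nonneg (mul_nonneg (by positivity : (0:ℝ) ≤ s^2) (by positivity : (0:ℝ) ≤ w^4)) (sq_nonneg (s-w))]
  have m3 : 2*s*w^7 ≤ s^2*w^6 + w^8 := by nlinarith [mul_nonneg (by positivity : (0:ℝ) ≤ w^6) (sq_nonneg (s-w))]
  have h1 : 6*(s^4*B^2) ≤ 24*(s^6*w^2) := by nlinarith [mul_le_mul_of_nonneg_left hsq (by positivity : (0:ℝ) ≤ s^4)]
  have h2 : 12*(s^4*B*w^2) ≤ 12*(s^6*w^2 + s^4*w^4) := by nlinarith [mul_le_mul_of_nonneg_left hB1 (by positivity : (0:ℝ) ≤ s^4*w^2)]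
  have h3 : 4*(s^2*B^3) ≤ 16*(s^6*w^2+s^4*w^4) := by nlinarith [mul_le_mul_of_nonneg_left hB3 (by positivity : (0:ℝ) ≤ s^2)]
  have h4 : 12*(s^2*B^2*w^2) ≤ 48*(s^4*w^4) := by nlinarith [mul_le_mul_of_nonneg_left hsq (by positivity : (0:ℝ) ≤ s^2*w^2)]
  have h5 : 12*(s^2*B*w^4) ≤ 12*(s^4*w^4+s^2*w^6) := by nlinarith [mul_le_mul_of_nonneg_left hB1 (by positivity : (0:ℝ) ≤ s^2*w^4)]
  have h6 : B^4 ≤ 16*(s^4*w^4) := by linarith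
  have h7 : 4*(B^3*w^2) ≤ 16*(s^4*w^4+s^2*w^6) := by nlinarith [mul_le_mul_of_nonneg_left hB3 (by positivity : (0:ℝ) ≤ w^2)]
  have h8 : 6*(B^2*w^4) ≤ 24*(s^2*w^6) := by nlinarith [mul_le_mul_of_nonneg_left hsq (by positivity : (0:ℝ) ≤ w^4)]
  have h9 : 4*(B*w^6) ≤ 4*(s^2*w^6+w^8) := by nlinarith [mul_le_mul_of_nonneg_left hB1 (by positivity : (0:ℝ) ≤ w^6)]
  have hexp : (s^2+B+w^2)^4 = s^8+4*s^6*B+4*(s^6*w^2)+6*(s^4*B^2)+12*(s^4*B*w^2)+6*(s^4*w^4)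
      +4*(s^2*B^3)+12*(s^2*B^2*w^2)+12*(s^2*B*w^4)+4*(s^2*w^6)+B^4+4*(B^3*w^2)+6*(B^2*w^4)
      +4*(B*w^6)+w^8 := by ring
  have q1 : (0:ℝ) ≤ s^6*w^2 := by positivity
  have q2 : (0:ℝ) ≤ s^4*w^4 := by positivity
  have q3 : (0:ℝ) ≤ s^2*w^6 := by positivity
  have q4 : (0:ℝ) ≤ w^8 := by positivity
  rw [hexp]; linarith


lemma le_of_sq_le_sq' (a R : ℝ) (ha : 0 ≤ a) (hR : 0 ≤ R) (h : a^2 ≤ R^2) : a ≤ R := by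
  nlinarith [sq_nonneg (a - R), sq_nonneg (a + R)]

lemma sum_powersetCard_succ {α : Type*} [DecidableEq α] [Fintype α] (k : ℕ) (F : Finset α → ℝ) :
    ∑ θ ∈ powersetCard (k+1) (univ : Finset α), ((k:ℝ)+1) * F θ
      = ∑ θ ∈ powersetCard k (univ : Finset α), ∑ j ∈ θᶜ, F (insert j θ) := by
  have h1 : ∀ θ ∈ powersetCard (k+1) (univ : Finset α), ((k:ℝ)+1) * F θ = ∑ j ∈ θ, F θ := by
    intro θ hθ
    rw [sum_const, mem_powersetCard_univ.mp hθ, nsmul_eq_mul]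
    push_cast; ring
  rw [sum_congr rfl h1, sum_sigma', sum_sigma']
  refine sum_nbij' (fun x => ⟨x.1.erase x.2, x.2⟩) (fun x => ⟨insert x.2 x.1, x.2⟩) ?_ ?_ ?_ ?_ ?_
  · rintro ⟨θ, j⟩ hx
    rw [mem_sigma] at hx
    obtain ⟨hθ, hj⟩ := hx
    rw [mem_sigma]
    constructor
    · rw [mem_powersetCard_univ, card_erase_of_mem hj, mem_powersetCard_univ.mp hθ]
      omega
    · simpa using not_mem_erase j θ
  · rintro ⟨θ, j⟩ hx
    rw [mem_sigma] at hx
    obtain ⟨hθ, hj⟩ := hx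
    rw [mem_compl] at hj
    rw [mem_sigma]
    constructor
    · rw [mem_powersetCard_univ, card_insert_of_notMem hj, mem_powersetCard_univ.mp hθ]
    · exact mem_insert_self _ _
  · rintro ⟨θ, j⟩ hx
    rw [mem_sigma] at hx
    simp [insert_erase hx.2]
  · rintro ⟨θ, j⟩ hx
    rw [mem_sigma] at hx
    have := mem_compl.mp hx.2
    simp [erase_insert this]
  · rintro ⟨θ, j⟩ hx
    rw [mem_sigma] at hx
    simp [insert_erase hx.2]

section
variable {E : Type*} [NormedAddCommGroup E] [InnerProductSpace ℝ E]

local notation "⟪" x ", " y "⟫" => @inner ℝ _ _ x y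

lemma momentBound {N : ℕ} (v : Fin N → E) (hv : ∑ i, v i = 0) (M8 : ℝ) (hM8 : 0 ≤ M8)
    (hvM : ∑ i, ‖v i‖^8 ≤ N * M8) (k : ℕ) :
    ∑ θ ∈ powersetCard k (univ : Finset (Fin N)), ‖∑ i ∈ θ, v i‖^8
      ≤ (N.choose k : ℝ) * (128*k)^4 * M8 := by
  induction k with
  | zero => simp [powersetCard_zero]
  | succ k ih =>
    rcases le_or_gt (k+1) N with hkN | hkN
    swap
    · rw [powersetCard_eq_empty.mpr (by simpa using hkN)]
      simp only [sum_empty]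
      positivity
    -- notation
    set S : Finset (Fin N) → E := fun θ => ∑ i ∈ θ, v i with hS
    set Q : Finset (Fin N) → Fin N → ℝ := fun θ j =>
      ‖S θ‖^6*‖v j‖^2 + ‖S θ‖^4*‖v j‖^4 + ‖S θ‖^2*‖v j‖^6 + ‖v j‖^8 with hQ
    have hkN' : (k:ℝ) < N := by exact_mod_cast hkN
    -- Step 1 : (k+1) * T(k+1) = double sum
    have step1 : ((k:ℝ)+1) * ∑ θ ∈ powersetCard (k+1) (univ : Finset (Fin N)), ‖S θ‖^8
        = ∑ θ ∈ powersetCard k (univ : Finset (Fin N)), ∑ j ∈ θᶜ, ‖S θ + v j‖^8 := by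
      rw [mul_sum, sum_powersetCard_succ k (fun θ => ‖S θ‖^8)]
      refine sum_congr rfl fun θ hθ => sum_congr rfl fun j hj => ?_
      have hjθ : j ∉ θ := mem_compl.mp hj
      rw [hS]; simp only
      rw [sum_insert hjθ]
      rw [add_comm]
    -- per-θ facts
    have hcompl : ∀ θ ∈ powersetCard k (univ : Finset (Fin N)), ∑ j ∈ θᶜ, v j = -(S θ) := by
      intro θ hθ
      have := Finset.sum_add_sum_compl θ v
      rw [hv] at this
      exact eq_neg_of_add_eq_zero_left (by rw [add_comm]; exact this)
    have hcard : ∀ θ ∈ powersetCard k (univ : Finset (Fin N)), (θᶜ.card : ℝ) = (N:ℝ) - k := by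
      intro θ hθ
      rw [card_compl, mem_powersetCard_univ.mp hθ, Fintype.card_fin,
        Nat.cast_sub (Nat.le_of_succ_le hkN)]
    -- Step 2: pointwise bound then sum over j
    have step2 : ∀ θ ∈ powersetCard k (univ : Finset (Fin N)),
        ∑ j ∈ θᶜ, ‖S θ + v j‖^8 ≤ ((N:ℝ) - k) * ‖S θ‖^8 + 128 * ∑ j ∈ θᶜ, Q θ j := by
      intro θ hθ
      have hpt : ∀ j ∈ θᶜ, ‖S θ + v j‖^8
          ≤ ‖S θ‖^8 + 8*‖S θ‖^6*⟪S θ, v j⟫ + 128 * Q θ j := by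
        intro j _
        have hn : ‖S θ + v j‖^2 = ‖S θ‖^2 + 2*⟪S θ, v j⟫ + ‖v j‖^2 := norm_add_sq_real _ _
        have h8 : ‖S θ + v j‖^8 = (‖S θ + v j‖^2)^4 := by ring
        have hip := abs_real_inner_le_norm (S θ) (v j)
        have hB1 : 2*⟪S θ, v j⟫ ≤ 2*‖S θ‖*‖v j‖ := by
          have := abs_le.mp hip
          nlinarith [this.2]
        have hB2 : -(2*‖S θ‖*‖v j‖) ≤ 2*⟪S θ, v j⟫ := by
          have := abs_le.mp hip
          nlinarith [this.1]
        have key := key_pointwise ‖S θ‖ ‖v j‖ (2*⟪S θ, v j⟫) (norm_nonneg _) (norm_nonneg _) hB1 hB2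
        rw [h8, hn, hQ]
        simp only
        nlinarith [key]
      calc ∑ j ∈ θᶜ, ‖S θ + v j‖^8
          ≤ ∑ j ∈ θᶜ, (‖S θ‖^8 + 8*‖S θ‖^6*⟪S θ, v j⟫ + 128 * Q θ j) := sum_le_sum hpt
        _ = (θᶜ.card : ℝ) * ‖S θ‖^8 + 8*‖S θ‖^6*⟪S θ, ∑ j ∈ θᶜ, v j⟫ + 128 * ∑ j ∈ θᶜ, Q θ j := by
            rw [sum_add_distrib, sum_add_distrib, sum_const, nsmul_eq_mul, ← mul_sum, ← inner_sum,
              mul_sum]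
        _ ≤ ((N:ℝ) - k) * ‖S θ‖^8 + 128 * ∑ j ∈ θᶜ, Q θ j := by
            rw [hcompl θ hθ, hcard θ hθ]
            have : ⟪S θ, -(S θ)⟫ = -(‖S θ‖^2) := by
              rw [inner_neg_right, real_inner_self_eq_norm_sq]
            rw [this]
            nlinarith [pow_nonneg (norm_nonneg (S θ)) 6, sq_nonneg ‖S θ‖,
              mul_nonneg (pow_nonneg (norm_nonneg (S θ)) 6) (sq_nonneg ‖S θ‖)]
    -- sigma set and CS quantities
    set Ω := (powersetCard k (univ : Finset (Fin N))).sigma (fun θ => θᶜ) with hΩdef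
    set a := ∑ ω ∈ Ω, ‖S ω.1‖^6 * ‖v ω.2‖^2 with hadef
    set b := ∑ ω ∈ Ω, ‖S ω.1‖^4 * ‖v ω.2‖^4 with hbdef
    set c := ∑ ω ∈ Ω, ‖S ω.1‖^2 * ‖v ω.2‖^6 with hcdef
    set W := ∑ ω ∈ Ω, ‖v ω.2‖^8 with hWdef
    set X := ∑ ω ∈ Ω, ‖S ω.1‖^8 with hXdef
    have ha0 : 0 ≤ a := sum_nonneg fun ω _ => by positivity
    have hb0 : 0 ≤ b := sum_nonneg fun ω _ => by positivity
    have hc0 : 0 ≤ c := sum_nonneg fun ω _ => by positivity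
    have hW0 : 0 ≤ W := sum_nonneg fun ω _ => by positivity
    have hX0 : 0 ≤ X := sum_nonneg fun ω _ => by positivity
    have hQsum : ∑ θ ∈ powersetCard k (univ : Finset (Fin N)), ∑ j ∈ θᶜ, Q θ j
        = a + b + c + W := by
      rw [hadef, hbdef, hcdef, hWdef, ← sum_add_distrib, ← sum_add_distrib, ← sum_add_distrib,
        sum_sigma]
    have hXeq : X = ((N:ℝ)-k) * ∑ θ ∈ powersetCard k (univ : Finset (Fin N)), ‖S θ‖^8 := by
      rw [hXdef, sum_sigma, mul_sum]
      refine sum_congr rfl fun θ hθ => ?_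
      show (∑ _j ∈ θᶜ, ‖S θ‖^8) = ((N:ℝ)-(k:ℝ)) * ‖S θ‖^8
      rw [sum_const, nsmul_eq_mul, hcard θ hθ]
    set ck := (N.choose k : ℝ) with hckdef
    set D := ((N:ℝ)-k) * ck with hDdef
    set R1 := 128*(k:ℝ) with hR1def
    have hR10 : 0 ≤ R1 := by positivity
    have hD0 : 0 ≤ D := by
      have : (0:ℝ) ≤ ck := by positivity
      have h2 : (0:ℝ) ≤ (N:ℝ)-k := by linarith
      positivity
    have hXle : X ≤ D * R1^4 * M8 := by
      rw [hXeq, hDdef, hR1def]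
      calc ((N:ℝ)-k) * ∑ θ ∈ powersetCard k (univ : Finset (Fin N)), ‖S θ‖^8
          ≤ ((N:ℝ)-k) * (ck * (128*(k:ℝ))^4 * M8) :=
            mul_le_mul_of_nonneg_left ih (by linarith)
        _ = ((N:ℝ)-k) * ck * (128*(k:ℝ))^4 * M8 := by ring
    have hWle : W ≤ D * M8 := by
      have hkle : k ≤ N := Nat.le_of_succ_le hkN
      have hWcount : W = ((N-1).choose k : ℝ) * ∑ j, ‖v j‖^8 := by
        rw [hWdef, sum_sigma]
        have h1 : ∀ θ ∈ powersetCard k (univ : Finset (Fin N)),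
            ∑ j ∈ θᶜ, ‖v j‖^8 = ∑ j : Fin N, if j ∈ θᶜ then ‖v j‖^8 else 0 := by
          intro θ _
          rw [Finset.sum_ite_mem, univ_inter]
        rw [sum_congr rfl h1, Finset.sum_comm]
        rw [mul_sum]
        refine sum_congr rfl fun j _ => ?_
        rw [← Finset.sum_filter]
        have hfil : (powersetCard k (univ : Finset (Fin N))).filter (fun θ => j ∈ θᶜ)
            = powersetCard k ({j}ᶜ) := by
          ext θ
          constructor
          · intro h
            rw [mem_filter] at h
            obtain ⟨hθ', hj⟩ := h
            rw [mem_powersetCard]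
            refine ⟨fun i hi => ?_, mem_powersetCard_univ.mp hθ'⟩
            rw [mem_compl, mem_singleton]
            rintro rfl
            exact (mem_compl.mp hj) hi
          · intro h
            rw [mem_powersetCard] at h
            obtain ⟨hsub, hcard'⟩ := h
            rw [mem_filter]
            refine ⟨mem_powersetCard_univ.mpr hcard', ?_⟩
            rw [mem_compl]
            intro hj
            have h5 := hsub hj
            rw [mem_compl, mem_singleton] at h5
            exact h5 rfl
        rw [hfil, sum_const, card_powersetCard, nsmul_eq_mul]
        have : ({j}ᶜ : Finset (Fin N)).card = N - 1 := by
          rw [card_compl, card_singleton, Fintype.card_fin]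
        rw [this]
      have hnat : (N:ℝ) * ((N-1).choose k : ℝ) = ((N:ℝ)-k) * ck := by
        have h1 : N - 1 + 1 = N := by omega
        have h2 := Nat.add_one_mul_choose_eq (N-1) k
        rw [h1] at h2
        have h3 := Nat.choose_succ_right_eq N k
        have h4 : N * ((N-1).choose k) = N.choose k * (N - k) := by rw [h2, h3]
        have : ((N * ((N-1).choose k) : ℕ) : ℝ) = ((N.choose k * (N - k) : ℕ) : ℝ) := by exact_mod_cast congrArg (Nat.cast : ℕ → ℝ) h4
        push_cast [Nat.cast_sub hkle] at this
        rw [hckdef]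
        linarith
      rw [hWcount, hDdef]
      calc ((N-1).choose k : ℝ) * ∑ j, ‖v j‖^8 ≤ ((N-1).choose k : ℝ) * ((N:ℝ) * M8) := by
            apply mul_le_mul_of_nonneg_left hvM (by positivity)
        _ = ((N:ℝ) * ((N-1).choose k : ℝ)) * M8 := by ring
        _ = ((N:ℝ)-k) * ck * M8 := by rw [hnat]
    -- Cauchy-Schwarz
    have cs1 : b^2 ≤ X * W := by
      have h := sum_mul_sq_le_sq_mul_sq Ω (fun ω => ‖S ω.1‖^4) (fun ω => ‖v ω.2‖^4)
      have e1 : ∑ ω ∈ Ω, (‖S ω.1‖^4)^2 = X := by rw [hXdef]; exact sum_congr rfl fun ω _ => by ring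
      have e2 : ∑ ω ∈ Ω, (‖v ω.2‖^4)^2 = W := by rw [hWdef]; exact sum_congr rfl fun ω _ => by ring
      rw [e1, e2] at h
      exact h
    have cs2 : a^2 ≤ X * b := by
      have h := sum_mul_sq_le_sq_mul_sq Ω (fun ω => ‖S ω.1‖^4) (fun ω => ‖S ω.1‖^2 * ‖v ω.2‖^2)
      have e0 : ∑ ω ∈ Ω, ‖S ω.1‖^4 * (‖S ω.1‖^2 * ‖v ω.2‖^2) = a := by
        rw [hadef]; exact sum_congr rfl fun ω _ => by ring
      have e1 : ∑ ω ∈ Ω, (‖S ω.1‖^4)^2 = X := by rw [hXdef]; exact sum_congr rfl fun ω _ => by ring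
      have e2 : ∑ ω ∈ Ω, (‖S ω.1‖^2 * ‖v ω.2‖^2)^2 = b := by
        rw [hbdef]; exact sum_congr rfl fun ω _ => by ring
      rw [e0, e1, e2] at h
      exact h
    have cs3 : c^2 ≤ b * W := by
      have h := sum_mul_sq_le_sq_mul_sq Ω (fun ω => ‖S ω.1‖^2 * ‖v ω.2‖^2) (fun ω => ‖v ω.2‖^4)
      have e0 : ∑ ω ∈ Ω, (‖S ω.1‖^2 * ‖v ω.2‖^2) * ‖v ω.2‖^4 = c := by
        rw [hcdef]; exact sum_congr rfl fun ω _ => by ring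
      have e1 : ∑ ω ∈ Ω, (‖S ω.1‖^2 * ‖v ω.2‖^2)^2 = b := by
        rw [hbdef]; exact sum_congr rfl fun ω _ => by ring
      have e2 : ∑ ω ∈ Ω, (‖v ω.2‖^4)^2 = W := by rw [hWdef]; exact sum_congr rfl fun ω _ => by ring
      rw [e0, e1, e2] at h
      exact h
    have hb : b ≤ D * R1^2 * M8 := by
      refine le_of_sq_le_sq' _ _ hb0 (by positivity) ?_
      have h1 : X * W ≤ (D * R1^4 * M8) * (D * M8) := mul_le_mul hXle hWle hW0 (by positivity)
      nlinarith [cs1]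
    have ha : a ≤ D * R1^3 * M8 := by
      refine le_of_sq_le_sq' _ _ ha0 (by positivity) ?_
      have h1 : X * b ≤ (D * R1^4 * M8) * (D * R1^2 * M8) := mul_le_mul hXle hb hb0 (by positivity)
      nlinarith [cs2]
    have hc : c ≤ D * R1 * M8 := by
      refine le_of_sq_le_sq' _ _ hc0 (by positivity) ?_
      have h1 : b * W ≤ (D * R1^2 * M8) * (D * M8) := mul_le_mul hb hWle hW0 (by positivity)
      nlinarith [cs3]
    -- final assembly
    have hDid : ((k:ℝ)+1) * (N.choose (k+1) : ℝ) = D := by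
      have h3 := Nat.choose_succ_right_eq N k
      have : ((N.choose (k+1) * (k+1) : ℕ) : ℝ) = ((N.choose k * (N - k) : ℕ) : ℝ) := by exact_mod_cast congrArg (Nat.cast : ℕ → ℝ) h3
      push_cast [Nat.cast_sub (Nat.le_of_succ_le hkN)] at this
      rw [hDdef, hckdef]
      linarith
    have hpoly : R1^4 + 128*(R1^3 + R1^2 + R1 + 1) ≤ (128*((k:ℝ)+1))^4 := by
      rw [hR1def]
      have hk0 : (0:ℝ) ≤ (k:ℝ) := Nat.cast_nonneg k
      nlinarith [pow_nonneg hk0 2, pow_nonneg hk0 3, pow_nonneg hk0 4, hk0,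
        mul_nonneg hk0 hk0, mul_nonneg (mul_nonneg hk0 hk0) hk0]
    have final : ((k:ℝ)+1) * ∑ θ ∈ powersetCard (k+1) (univ : Finset (Fin N)), ‖S θ‖^8
        ≤ ((k:ℝ)+1) * ((N.choose (k+1) : ℝ) * (128*((k:ℝ)+1))^4 * M8) := by
      rw [step1]
      calc ∑ θ ∈ powersetCard k (univ : Finset (Fin N)), ∑ j ∈ θᶜ, ‖S θ + v j‖^8
          ≤ ∑ θ ∈ powersetCard k (univ : Finset (Fin N)),
              (((N:ℝ) - k) * ‖S θ‖^8 + 128 * ∑ j ∈ θᶜ, Q θ j) := sum_le_sum step2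
        _ = ((N:ℝ)-k) * (∑ θ ∈ powersetCard k (univ : Finset (Fin N)), ‖S θ‖^8)
              + 128 * (a + b + c + W) := by
            rw [sum_add_distrib, ← mul_sum, ← mul_sum, hQsum]
        _ ≤ D * R1^4 * M8 + 128 * (D*R1^3*M8 + D*R1^2*M8 + D*R1*M8 + D*M8) := by
            have hX' : ((N:ℝ)-k) * (∑ θ ∈ powersetCard k (univ : Finset (Fin N)), ‖S θ‖^8)
                ≤ D * R1^4 * M8 := by rw [← hXeq]; exact hXle
            linarith
        _ = D * (R1^4 + 128*(R1^3 + R1^2 + R1 + 1)) * M8 := by ring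
        _ ≤ D * (128*((k:ℝ)+1))^4 * M8 := by
            apply mul_le_mul_of_nonneg_right _ hM8
            exact mul_le_mul_of_nonneg_left hpoly hD0
        _ = ((k:ℝ)+1) * ((N.choose (k+1) : ℝ) * (128*((k:ℝ)+1))^4 * M8) := by
            rw [← hDid]; ring
    have hpos : (0:ℝ) < (k:ℝ)+1 := by positivity
    have h6 := le_of_mul_le_mul_left final hpos
    have hcast : ((k+1 : ℕ):ℝ) = (k:ℝ)+1 := by push_cast; ring
    rw [hcast]
    exact h6

end





lemma sq_integral_le (f : ℝ → ℝ) (hf : Continuous f) :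
    (∫ t in (0:ℝ)..1, f t)^2 ≤ ∫ t in (0:ℝ)..1, (f t)^2 := by
  set c := ∫ t in (0:ℝ)..1, f t with hc
  have hInt : IntervalIntegrable f MeasureTheory.volume 0 1 := hf.intervalIntegrable _ _
  have hInt2 : IntervalIntegrable (fun t => (f t)^2) MeasureTheory.volume 0 1 :=
    (hf.pow 2).intervalIntegrable _ _
  have h0 : 0 ≤ ∫ t in (0:ℝ)..1, (f t - c)^2 :=
    intervalIntegral.integral_nonneg (by norm_num) (fun t _ => sq_nonneg _)
  have hexp : ∫ t in (0:ℝ)..1, (f t - c)^2 = (∫ t in (0:ℝ)..1, (f t)^2) - c^2 := by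
    have h1 : ∀ t, (f t - c)^2 = (f t)^2 - (2*c)*(f t) + c^2 := fun t => by ring
    simp_rw [h1]
    rw [intervalIntegral.integral_add (hInt2.sub (hInt.const_mul (2*c)))
      (intervalIntegrable_const), intervalIntegral.integral_sub hInt2 (hInt.const_mul (2*c)),
      intervalIntegral.integral_const_mul, intervalIntegral.integral_const, ← hc]
    simp
    ring
  linarith

lemma integral_pow8_le (f : ℝ → ℝ) (hf : Continuous f) (hf0 : ∀ t, 0 ≤ f t) :
    (∫ t in (0:ℝ)..1, f t)^8 ≤ ∫ t in (0:ℝ)..1, (f t)^8 := by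
  have h1 := sq_integral_le f hf
  have h2 := sq_integral_le (fun t => (f t)^2) (hf.pow 2)
  have h3 := sq_integral_le (fun t => (f t)^4) (hf.pow 4)
  have e2 : ∫ t in (0:ℝ)..1, ((f t)^2)^2 = ∫ t in (0:ℝ)..1, (f t)^4 := by
    apply intervalIntegral.integral_congr; intro t _; ring
  have e3 : ∫ t in (0:ℝ)..1, ((f t)^4)^2 = ∫ t in (0:ℝ)..1, (f t)^8 := by
    apply intervalIntegral.integral_congr; intro t _; ring
  rw [e2] at h2
  rw [e3] at h3
  have i1 : 0 ≤ ∫ t in (0:ℝ)..1, f t := intervalIntegral.integral_nonneg (by norm_num) (fun t _ => hf0 t)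
  have i2 : 0 ≤ ∫ t in (0:ℝ)..1, (f t)^2 := intervalIntegral.integral_nonneg (by norm_num) (fun t _ => by positivity)
  have i4 : 0 ≤ ∫ t in (0:ℝ)..1, (f t)^4 := intervalIntegral.integral_nonneg (by norm_num) (fun t _ => by positivity)
  calc (∫ t in (0:ℝ)..1, f t)^8 = ((∫ t in (0:ℝ)..1, f t)^2)^4 := by ring
    _ ≤ (∫ t in (0:ℝ)..1, (f t)^2)^4 := pow_le_pow_left₀ (by positivity) h1 4
    _ = ((∫ t in (0:ℝ)..1, (f t)^2)^2)^2 := by ring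
    _ ≤ (∫ t in (0:ℝ)..1, (f t)^4)^2 := pow_le_pow_left₀ (by positivity) h2 2
    _ ≤ ∫ t in (0:ℝ)..1, (f t)^8 := h3

section
variable {E : Type*} [NormedAddCommGroup E] [InnerProductSpace ℝ E] [CompleteSpace E]

lemma grad_diff_deriv_bound (f g : E → ℝ) (hf : ContDiff ℝ 2 f) (hg : ContDiff ℝ 2 g) (y : E) :
    ‖fderiv ℝ (fun z => gradient f z - gradient g z) y‖
      ≤ ‖iteratedFDeriv ℝ 2 f y - iteratedFDeriv ℝ 2 g y‖ := by
  have h12 : (1:WithTop ℕ∞) + 1 ≤ 2 := by norm_num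
  set L : (E →L[ℝ] ℝ) →L[ℝ] E :=
    (InnerProductSpace.toDual ℝ E).symm.toLinearIsometry.toContinuousLinearMap with hL
  have hfd : DifferentiableAt ℝ (fderiv ℝ f) y :=
    ((hf.fderiv_right h12).differentiable one_ne_zero).differentiableAt
  have hgd : DifferentiableAt ℝ (fderiv ℝ g) y :=
    ((hg.fderiv_right h12).differentiable one_ne_zero).differentiableAt
  have heq : (fun z => gradient f z - gradient g z)
      = fun z => L (fderiv ℝ f z - fderiv ℝ g z) := by
    funext z
    show (InnerProductSpace.toDual ℝ E).symm (fderiv ℝ f z)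
        - (InnerProductSpace.toDual ℝ E).symm (fderiv ℝ g z) = _
    rw [map_sub]
    rfl
  rw [heq]
  have hΨ : DifferentiableAt ℝ (fun z => fderiv ℝ f z - fderiv ℝ g z) y := hfd.sub hgd
  have hcomp : fderiv ℝ (fun z => L (fderiv ℝ f z - fderiv ℝ g z)) y
      = L.comp (fderiv ℝ (fun z => fderiv ℝ f z - fderiv ℝ g z) y) :=
    (L.hasFDerivAt.comp y hΨ.hasFDerivAt).fderiv
  rw [hcomp, fderiv_fun_sub hfd hgd]
  set A := fderiv ℝ (fderiv ℝ f) y - fderiv ℝ (fderiv ℝ g) y with hA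
  set Δ := iteratedFDeriv ℝ 2 f y - iteratedFDeriv ℝ 2 g y with hΔ
  have hAΔ : ∀ u v : E, A u v = Δ ![u, v] := by
    intro u v
    rw [hA, hΔ]
    simp only [ContinuousLinearMap.coe_sub', Pi.sub_apply, ContinuousLinearMap.sub_apply,
      ContinuousMultilinearMap.sub_apply]
    rw [iteratedFDeriv_two_apply, iteratedFDeriv_two_apply]
    simp
  have hAn : ‖A‖ ≤ ‖Δ‖ := by
    refine ContinuousLinearMap.opNorm_le_bound _ (norm_nonneg Δ) (fun u => ?_)
    refine ContinuousLinearMap.opNorm_le_bound _ (by positivity) (fun v => ?_)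
    rw [hAΔ u v]
    calc ‖Δ ![u, v]‖ ≤ ‖Δ‖ * ∏ i, ‖(![u, v]) i‖ := Δ.le_opNorm _
      _ = ‖Δ‖ * ‖u‖ * ‖v‖ := by rw [Fin.prod_univ_two]; simp [mul_assoc]
  calc ‖L.comp A‖ ≤ ‖L‖ * ‖A‖ := ContinuousLinearMap.opNorm_comp_le _ _
    _ ≤ 1 * ‖Δ‖ := by
        apply mul_le_mul (LinearIsometry.norm_toContinuousLinearMap_le _) hAn (norm_nonneg A)
        norm_num
    _ = ‖Δ‖ := one_mul _

end

theorem stmt_9 : ∃ C : ℝ, 0 < C ∧ ∀ d N p : ℕ, 1 ≤ d → 1 ≤ N → 1 ≤ p → p ≤ N →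
    ∀ σ : ℝ, 0 < σ →
    ∀ U : Fin N → EuclideanSpace ℝ (Fin d) → ℝ,
    (∀ i, ContDiff ℝ 2 (U i)) →
    (∀ y : EuclideanSpace ℝ (Fin d),
      (1 / (N : ℝ)) * ∑ i,
          ‖gradient (U i) y - gradient (fun z => (1 / (N : ℝ)) * ∑ j, U j z) y‖ ^ 8
        ≤ (σ ^ 2 * d) ^ 4) →
    (∀ y : EuclideanSpace ℝ (Fin d),
      (1 / (N : ℝ)) * ∑ i,
          ‖iteratedFDeriv ℝ 2 (U i) y -
            iteratedFDeriv ℝ 2 (fun z => (1 / (N : ℝ)) * ∑ j, U j z) y‖ ^ 8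
        ≤ σ ^ 8) →
    ∀ x xs : EuclideanSpace ℝ (Fin d),
      ((∑ θ ∈ Finset.powersetCard p (Finset.univ : Finset (Fin N)),
          ‖(p : ℝ)⁻¹ • (∑ i ∈ θ, gradient (U i) x) -
            (p : ℝ)⁻¹ • (∑ i ∈ θ, gradient (U i) xs) +
            gradient (fun z => (1 / (N : ℝ)) * ∑ j, U j z) xs -
            gradient (fun z => (1 / (N : ℝ)) * ∑ j, U j z) x‖ ^ 8) /
          (N.choose p : ℝ)) ^ ((1 : ℝ) / 4)
        ≤ C * σ ^ 2 / p * min (d : ℝ) (‖x - xs‖ ^ 2) := by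
  refine ⟨512, by norm_num, ?_⟩
  intro d N p hd hN hp hpN σ hσ U hU hgrad hhess x xs
  set Uau : EuclideanSpace ℝ (Fin d) → ℝ := fun z => (1 / (N : ℝ)) * ∑ j, U j z with hUau
  have hNpos : (0:ℝ) < (N:ℝ) := by exact_mod_cast hN
  have hppos : (0:ℝ) < (p:ℝ) := by exact_mod_cast hp
  have hscale : ∀ S B : ℝ, (1/(N:ℝ))*S ≤ B → S ≤ (N:ℝ)*B := by
    intro S B h
    have h2 := mul_le_mul_of_nonneg_left h (le_of_lt hNpos)
    rwa [← mul_assoc, mul_one_div_cancel (ne_of_gt hNpos), one_mul] at h2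
  have hUauC : ContDiff ℝ 2 Uau := by
    rw [hUau]
    exact contDiff_const.mul (ContDiff.sum fun i _ => hU i)
  have hdiff : ∀ (i : Fin N) (y : EuclideanSpace ℝ (Fin d)), DifferentiableAt ℝ (U i) y :=
    fun i y => ((hU i).differentiable (by norm_num)).differentiableAt
  have hgradUau : ∀ y : EuclideanSpace ℝ (Fin d),
      gradient Uau y = (N:ℝ)⁻¹ • ∑ i, gradient (U i) y := by
    intro y
    show (InnerProductSpace.toDual ℝ _).symm (fderiv ℝ Uau y) = _
    have h1 : fderiv ℝ Uau y = (1/(N:ℝ)) • ∑ i, fderiv ℝ (U i) y := by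
      rw [hUau]
      rw [fderiv_const_mul (DifferentiableAt.fun_sum fun i _ => hdiff i y) (1/(N:ℝ)),
        fderiv_fun_sum (fun i _ => hdiff i y)]
    rw [h1, map_smul, map_sum]
    rw [one_div]
    rfl
  have hsum_a : ∀ y : EuclideanSpace ℝ (Fin d),
      ∑ i, (gradient (U i) y - gradient Uau y) = 0 := by
    intro y
    rw [Finset.sum_sub_distrib, Finset.sum_const, Finset.card_univ, Fintype.card_fin,
      hgradUau y, ← Nat.cast_smul_eq_nsmul ℝ, smul_smul, mul_inv_cancel₀ (ne_of_gt hNpos),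
      one_smul, sub_self]
  set w : Fin N → EuclideanSpace ℝ (Fin d) := fun i =>
    (gradient (U i) x - gradient Uau x) - (gradient (U i) xs - gradient Uau xs) with hw
  have hw_sum : ∑ i, w i = 0 := by
    rw [hw]
    simp only
    rw [Finset.sum_sub_distrib, hsum_a x, hsum_a xs, sub_self]
  -- branch 1
  have hgradN : ∀ y, ∑ i, ‖gradient (U i) y - gradient Uau y‖^8 ≤ (N:ℝ)*(σ^2*(d:ℝ))^4 :=
    fun y => hscale _ _ (hgrad y)
  have hbr1 : ∑ i, ‖w i‖^8 ≤ (N:ℝ) * (4*(σ^2*(d:ℝ)))^4 := by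
    have h8 : ∀ i : Fin N, ‖w i‖^8 ≤ 128*(‖gradient (U i) x - gradient Uau x‖^8
        + ‖gradient (U i) xs - gradient Uau xs‖^8) := by
      intro i
      have htri : ‖w i‖ ≤ ‖gradient (U i) x - gradient Uau x‖
          + ‖gradient (U i) xs - gradient Uau xs‖ := norm_sub_le _ _
      calc ‖w i‖^8 ≤ (‖gradient (U i) x - gradient Uau x‖
            + ‖gradient (U i) xs - gradient Uau xs‖)^8 :=
          pow_le_pow_left₀ (norm_nonneg _) htri 8
        _ ≤ 128*(‖gradient (U i) x - gradient Uau x‖^8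
            + ‖gradient (U i) xs - gradient Uau xs‖^8) :=
          pow8_add_le _ _ (norm_nonneg _) (norm_nonneg _)
    calc ∑ i, ‖w i‖^8 ≤ ∑ i, 128*(‖gradient (U i) x - gradient Uau x‖^8
          + ‖gradient (U i) xs - gradient Uau xs‖^8) := Finset.sum_le_sum (fun i _ => h8 i)
      _ = 128*((∑ i, ‖gradient (U i) x - gradient Uau x‖^8)
          + (∑ i, ‖gradient (U i) xs - gradient Uau xs‖^8)) := by
          rw [← Finset.mul_sum, Finset.sum_add_distrib]
      _ ≤ 128*((N:ℝ)*(σ^2*(d:ℝ))^4 + (N:ℝ)*(σ^2*(d:ℝ))^4) := by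
          have h1 := hgradN x
          have h2 := hgradN xs
          nlinarith [h1, h2]
      _ = (N:ℝ)*(4*(σ^2*(d:ℝ)))^4 := by ring
  -- branch 2
  have hbr2 : ∑ i, ‖w i‖^8 ≤ (N:ℝ) * (σ^2*‖x-xs‖^2)^4 := by
    set γ : ℝ → EuclideanSpace ℝ (Fin d) := fun t => xs + t • (x - xs) with hγ
    have hγc : Continuous γ := by
      rw [hγ]
      exact continuous_const.add (continuous_id.smul continuous_const)
    have hγd : ∀ t : ℝ, HasDerivAt γ (x - xs) t := by
      intro t
      rw [hγ]
      simpa using ((hasDerivAt_id t).smul_const (x - xs)).const_add xs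
    set G : Fin N → EuclideanSpace ℝ (Fin d) → EuclideanSpace ℝ (Fin d) :=
      fun i z => gradient (U i) z - gradient Uau z with hG
    have h12 : (1:WithTop ℕ∞) + 1 ≤ 2 := by norm_num
    have hGc : ∀ i, ContDiff ℝ 1 (G i) := by
      intro i
      have h1 : ContDiff ℝ 1 (fun z => fderiv ℝ (U i) z - fderiv ℝ Uau z) :=
        ((hU i).fderiv_right h12).sub (hUauC.fderiv_right h12)
      have h2 : G i = fun z =>
          (InnerProductSpace.toDual ℝ (EuclideanSpace ℝ (Fin d))).symm.toLinearIsometry.toContinuousLinearMap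
            (fderiv ℝ (U i) z - fderiv ℝ Uau z) := by
        funext z
        show gradient (U i) z - gradient Uau z = _
        show (InnerProductSpace.toDual ℝ _).symm (fderiv ℝ (U i) z)
            - (InnerProductSpace.toDual ℝ _).symm (fderiv ℝ Uau z) = _
        rw [← map_sub]
        rfl
      rw [h2]
      exact (ContinuousLinearMap.contDiff _).comp h1
    have hGd : ∀ i (y : EuclideanSpace ℝ (Fin d)), DifferentiableAt ℝ (G i) y :=
      fun i y => ((hGc i).differentiable one_ne_zero).differentiableAt
    have hGn : ∀ (i : Fin N) (y : EuclideanSpace ℝ (Fin d)),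
        ‖fderiv ℝ (G i) y‖ ≤ ‖iteratedFDeriv ℝ 2 (U i) y - iteratedFDeriv ℝ 2 Uau y‖ :=
      fun i y => grad_diff_deriv_bound (U i) Uau (hU i) hUauC y
    have hcB : ∀ i : Fin N, Continuous (fun t => (fderiv ℝ (G i) (γ t)) (x - xs)) := fun i =>
      (((hGc i).continuous_fderiv one_ne_zero).comp hγc).clm_apply continuous_const
    have hcΔ : ∀ i : Fin N, Continuous (fun t =>
        ‖iteratedFDeriv ℝ 2 (U i) (γ t) - iteratedFDeriv ℝ 2 Uau (γ t)‖^8 * ‖x - xs‖^8) := by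
      intro i
      have c1 : Continuous (iteratedFDeriv ℝ 2 (U i)) :=
        (hU i).continuous_iteratedFDeriv (by norm_num)
      have c2 : Continuous (iteratedFDeriv ℝ 2 Uau) :=
        hUauC.continuous_iteratedFDeriv (by norm_num)
      exact ((((c1.sub c2).comp hγc).norm.pow 8)).mul continuous_const
    have hwi8 : ∀ i : Fin N, ‖w i‖^8 ≤ ∫ t in (0:ℝ)..1,
        ‖iteratedFDeriv ℝ 2 (U i) (γ t) - iteratedFDeriv ℝ 2 Uau (γ t)‖^8 * ‖x - xs‖^8 := by
      intro i
      have hftc : G i x - G i xs = ∫ t in (0:ℝ)..1, (fderiv ℝ (G i) (γ t)) (x - xs) := by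
        have hderiv : ∀ t ∈ Set.uIcc (0:ℝ) 1, HasDerivAt (fun s => G i (γ s))
            ((fderiv ℝ (G i) (γ t)) (x - xs)) t := fun t _ =>
          ((hGd i (γ t)).hasFDerivAt).comp_hasDerivAt t (hγd t)
        have h := intervalIntegral.integral_eq_sub_of_hasDerivAt hderiv
          ((hcB i).intervalIntegrable 0 1)
        rw [h]
        have e1 : γ 1 = x := by rw [hγ]; simp
        have e0 : γ 0 = xs := by rw [hγ]; simp
        rw [e1, e0]
      have hwG : w i = G i x - G i xs := rfl
      have h1 : ‖w i‖ ≤ ∫ t in (0:ℝ)..1, ‖(fderiv ℝ (G i) (γ t)) (x - xs)‖ := by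
        rw [hwG, hftc]
        exact intervalIntegral.norm_integral_le_integral_norm (by norm_num)
      calc ‖w i‖^8 ≤ (∫ t in (0:ℝ)..1, ‖(fderiv ℝ (G i) (γ t)) (x - xs)‖)^8 :=
          pow_le_pow_left₀ (norm_nonneg _) h1 8
        _ ≤ ∫ t in (0:ℝ)..1, ‖(fderiv ℝ (G i) (γ t)) (x - xs)‖^8 :=
          integral_pow8_le _ ((hcB i).norm) (fun t => norm_nonneg _)
        _ ≤ ∫ t in (0:ℝ)..1,
            ‖iteratedFDeriv ℝ 2 (U i) (γ t) - iteratedFDeriv ℝ 2 Uau (γ t)‖^8 * ‖x - xs‖^8 := by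
            apply intervalIntegral.integral_mono_on (by norm_num)
              (((hcB i).norm.pow 8).intervalIntegrable 0 1) ((hcΔ i).intervalIntegrable 0 1)
            intro t _
            have hb : ‖(fderiv ℝ (G i) (γ t)) (x - xs)‖
                ≤ ‖iteratedFDeriv ℝ 2 (U i) (γ t) - iteratedFDeriv ℝ 2 Uau (γ t)‖ * ‖x - xs‖ :=
              le_trans ((fderiv ℝ (G i) (γ t)).le_opNorm (x - xs))
                (mul_le_mul_of_nonneg_right (hGn i (γ t)) (norm_nonneg _))
            calc ‖(fderiv ℝ (G i) (γ t)) (x - xs)‖^8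
                ≤ (‖iteratedFDeriv ℝ 2 (U i) (γ t) - iteratedFDeriv ℝ 2 Uau (γ t)‖ * ‖x - xs‖)^8 :=
                pow_le_pow_left₀ (norm_nonneg _) hb 8
              _ = ‖iteratedFDeriv ℝ 2 (U i) (γ t) - iteratedFDeriv ℝ 2 Uau (γ t)‖^8 * ‖x - xs‖^8 := by
                rw [mul_pow]
    have hhessN : ∀ y, ∑ i, ‖iteratedFDeriv ℝ 2 (U i) y - iteratedFDeriv ℝ 2 Uau y‖^8
        ≤ (N:ℝ)*σ^8 := fun y => hscale _ _ (hhess y)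
    calc ∑ i, ‖w i‖^8
        ≤ ∑ i, ∫ t in (0:ℝ)..1,
            ‖iteratedFDeriv ℝ 2 (U i) (γ t) - iteratedFDeriv ℝ 2 Uau (γ t)‖^8 * ‖x - xs‖^8 :=
          Finset.sum_le_sum (fun i _ => hwi8 i)
      _ = ∫ t in (0:ℝ)..1, ∑ i,
            ‖iteratedFDeriv ℝ 2 (U i) (γ t) - iteratedFDeriv ℝ 2 Uau (γ t)‖^8 * ‖x - xs‖^8 :=
          (intervalIntegral.integral_finset_sum
            (fun i _ => (hcΔ i).intervalIntegrable 0 1)).symm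
      _ ≤ ∫ t in (0:ℝ)..1, (N:ℝ)*σ^8*‖x - xs‖^8 := by
          apply intervalIntegral.integral_mono_on (by norm_num)
            ((continuous_finset_sum Finset.univ (fun i _ => hcΔ i)).intervalIntegrable 0 1)
            intervalIntegrable_const
          intro t _
          calc ∑ i, ‖iteratedFDeriv ℝ 2 (U i) (γ t) - iteratedFDeriv ℝ 2 Uau (γ t)‖^8 * ‖x - xs‖^8
              = (∑ i, ‖iteratedFDeriv ℝ 2 (U i) (γ t) - iteratedFDeriv ℝ 2 Uau (γ t)‖^8)
                  * ‖x - xs‖^8 := by rw [Finset.sum_mul]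
            _ ≤ ((N:ℝ)*σ^8) * ‖x - xs‖^8 :=
                mul_le_mul_of_nonneg_right (hhessN (γ t)) (by positivity)
            _ = (N:ℝ)*σ^8*‖x - xs‖^8 := by ring
      _ = (N:ℝ)*σ^8*‖x - xs‖^8 := by
          rw [intervalIntegral.integral_const]
          simp
      _ = (N:ℝ)*(σ^2*‖x - xs‖^2)^4 := by ring
  -- combine branches
  set m := min (4*(σ^2*(d:ℝ))) (σ^2*‖x-xs‖^2) with hm
  have hm0 : 0 ≤ m := le_min (by positivity) (by positivity)
  have hwm : ∑ i, ‖w i‖^8 ≤ (N:ℝ) * m^4 := by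
    rcases min_choice (4*(σ^2*(d:ℝ))) (σ^2*‖x-xs‖^2) with hEq | hEq <;> rw [hm, hEq]
    · exact hbr1
    · exact hbr2
  have hmom := momentBound w hw_sum (m^4) (by positivity) hwm p
  -- identify the estimator with (p)⁻¹ • ∑ w
  have hgid : ∀ θ ∈ Finset.powersetCard p (Finset.univ : Finset (Fin N)),
      (p : ℝ)⁻¹ • (∑ i ∈ θ, gradient (U i) x) - (p : ℝ)⁻¹ • (∑ i ∈ θ, gradient (U i) xs) +
        gradient Uau xs - gradient Uau x = (p:ℝ)⁻¹ • ∑ i ∈ θ, w i := by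
    intro θ hθ
    have hcard : θ.card = p := Finset.mem_powersetCard_univ.mp hθ
    have hsw : ∑ i ∈ θ, w i = (∑ i ∈ θ, gradient (U i) x) - (∑ i ∈ θ, gradient (U i) xs)
        - (p:ℝ) • gradient Uau x + (p:ℝ) • gradient Uau xs := by
      rw [hw]
      simp only
      rw [Finset.sum_sub_distrib, Finset.sum_sub_distrib, Finset.sum_sub_distrib,
        Finset.sum_const, Finset.sum_const, hcard]
      simp only [← Nat.cast_smul_eq_nsmul ℝ]
      abel
    rw [hsw, smul_add, smul_sub, smul_sub, smul_smul, smul_smul,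
      inv_mul_cancel₀ (ne_of_gt hppos), one_smul, one_smul]
    abel
  have hsum_g : (∑ θ ∈ Finset.powersetCard p (Finset.univ : Finset (Fin N)),
      ‖(p : ℝ)⁻¹ • (∑ i ∈ θ, gradient (U i) x) - (p : ℝ)⁻¹ • (∑ i ∈ θ, gradient (U i) xs) +
        gradient Uau xs - gradient Uau x‖ ^ 8)
      = ((p:ℝ)⁻¹)^8 * ∑ θ ∈ Finset.powersetCard p (Finset.univ : Finset (Fin N)),
          ‖∑ i ∈ θ, w i‖^8 := by
    rw [Finset.mul_sum]
    refine Finset.sum_congr rfl fun θ hθ => ?_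
    rw [hgid θ hθ, norm_smul, Real.norm_eq_abs, abs_of_pos (by positivity), mul_pow]
  -- final numeric computation
  have hchoose : (0:ℝ) < (N.choose p : ℝ) := by exact_mod_cast Nat.choose_pos hpN
  have hmin0 : 0 ≤ min (d:ℝ) (‖x - xs‖^2) := le_min (by positivity) (by positivity)
  set R := 512 * σ ^ 2 / (p:ℝ) * min (d : ℝ) (‖x - xs‖ ^ 2) with hR
  have hR0 : 0 ≤ R := by
    rw [hR]
    have : (0:ℝ) ≤ 512 * σ^2 / (p:ℝ) := by positivity
    exact mul_nonneg this hmin0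
  have hmR : 128 * m / (p:ℝ) ≤ R := by
    rw [hR]
    have hmle : m ≤ 4*σ^2* min (d:ℝ) (‖x - xs‖^2) := by
      rcases le_total ((d:ℝ)) (‖x - xs‖^2) with hc | hc
      · rw [min_eq_left hc]
        calc m ≤ 4*(σ^2*(d:ℝ)) := min_le_left _ _
          _ = 4*σ^2*(d:ℝ) := by ring
      · rw [min_eq_right hc]
        calc m ≤ σ^2*‖x-xs‖^2 := min_le_right _ _
          _ ≤ 4*σ^2*‖x-xs‖^2 := by nlinarith [sq_nonneg σ, sq_nonneg ‖x-xs‖, mul_nonneg (sq_nonneg σ) (sq_nonneg ‖x-xs‖)]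
    have h1 : 128*m ≤ 512*σ^2*min (d:ℝ) (‖x-xs‖^2) := by nlinarith [hmle]
    calc 128*m/(p:ℝ) ≤ (512*σ^2*min (d:ℝ) (‖x-xs‖^2))/(p:ℝ) := by gcongr
      _ = 512 * σ ^ 2 / (p:ℝ) * min (d : ℝ) (‖x - xs‖ ^ 2) := by ring
  have hZ0 : 0 ≤ (∑ θ ∈ Finset.powersetCard p (Finset.univ : Finset (Fin N)),
      ‖(p : ℝ)⁻¹ • (∑ i ∈ θ, gradient (U i) x) - (p : ℝ)⁻¹ • (∑ i ∈ θ, gradient (U i) xs) +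
        gradient Uau xs - gradient Uau x‖ ^ 8) / (N.choose p : ℝ) :=
    div_nonneg (Finset.sum_nonneg fun θ _ => by positivity) hchoose.le
  have hZle : (∑ θ ∈ Finset.powersetCard p (Finset.univ : Finset (Fin N)),
      ‖(p : ℝ)⁻¹ • (∑ i ∈ θ, gradient (U i) x) - (p : ℝ)⁻¹ • (∑ i ∈ θ, gradient (U i) xs) +
        gradient Uau xs - gradient Uau x‖ ^ 8) / (N.choose p : ℝ) ≤ R^4 := by
    rw [hsum_g, div_le_iff₀ hchoose]
    calc ((p:ℝ)⁻¹)^8 * ∑ θ ∈ Finset.powersetCard p (Finset.univ : Finset (Fin N)),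
          ‖∑ i ∈ θ, w i‖^8
        ≤ ((p:ℝ)⁻¹)^8 * ((N.choose p:ℝ)*(128*(p:ℝ))^4*m^4) :=
          mul_le_mul_of_nonneg_left hmom (by positivity)
      _ = (128*m/(p:ℝ))^4 * (N.choose p:ℝ) := by
          field_simp
      _ ≤ R^4 * (N.choose p:ℝ) := by
          apply mul_le_mul_of_nonneg_right _ hchoose.le
          exact pow_le_pow_left₀ (by positivity) hmR 4
  calc ((∑ θ ∈ Finset.powersetCard p (Finset.univ : Finset (Fin N)),
      ‖(p : ℝ)⁻¹ • (∑ i ∈ θ, gradient (U i) x) - (p : ℝ)⁻¹ • (∑ i ∈ θ, gradient (U i) xs) +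
        gradient Uau xs - gradient Uau x‖ ^ 8) / (N.choose p : ℝ)) ^ ((1:ℝ)/4)
      ≤ (R^4) ^ ((1:ℝ)/4) := Real.rpow_le_rpow hZ0 hZle (by norm_num)
    _ = R := by
        rw [← Real.rpow_natCast R 4, ← Real.rpow_mul hR0]
        norm_num
end

section
/- There exists an absolute constant C > 0 such that for every integer N ≥ 1, the double series Σ_{l=1}^∞ ( Σ_{s=l}^∞ s⁶ · (1 − 1/N)^{s−1} · (1/N) )^{1/2} converges and its sum is at most C·N⁴. -/
private lemma aux_pow6 (x : ℝ) (hx : 0 ≤ x) : x ^ 6 ≤ 46656 * Real.exp x := by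
  have h : x / 6 + 1 ≤ Real.exp (x / 6) := Real.add_one_le_exp (x / 6)
  have h2 : x / 6 ≤ Real.exp (x / 6) := by linarith
  have h3 : (x / 6) ^ 6 ≤ Real.exp (x / 6) ^ 6 :=
    pow_le_pow_left₀ (by positivity) h2 6
  have h4 : Real.exp (x / 6) ^ 6 = Real.exp x := by
    rw [← Real.exp_nat_mul]; congr 1; push_cast; ring
  rw [h4, div_pow] at h3
  nlinarith [h3]

private lemma aux_exp_half_le_two : Real.exp (1/2 : ℝ) ≤ 2 := by
  have h : Real.exp (1/2 : ℝ) = Real.sqrt (Real.exp 1) := by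
    rw [← Real.exp_half]
  rw [h]
  have h1 : Real.exp 1 ≤ 4 := by
    have := Real.exp_one_lt_d9; linarith
  calc Real.sqrt (Real.exp 1) ≤ Real.sqrt 4 := Real.sqrt_le_sqrt h1
    _ = 2 := by
        rw [show (4:ℝ) = 2^2 by norm_num, Real.sqrt_sq (by norm_num)]

private lemma aux_unif (n : ℝ) (hn : 1 ≤ n) (s : ℕ) (hs : 1 ≤ s) :
    (s : ℝ) ^ 6 * Real.sqrt (1 - 1/n) ^ (s - 1) ≤ 5971968 * n ^ 6 := by
  have hn0 : 0 < n := lt_of_lt_of_le one_pos hn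
  set t : ℝ := (s : ℝ) with ht_def
  have ht1 : 1 ≤ t := by rw [ht_def]; exact_mod_cast hs
  have hqe : 1 - 1/n ≤ Real.exp (-(1/n)) := by
    have := Real.add_one_le_exp (-(1/n)); linarith
  have hre : Real.sqrt (1 - 1/n) ≤ Real.exp (-(1/(2*n))) := by
    have h1 : Real.sqrt (1 - 1/n) ≤ Real.sqrt (Real.exp (-(1/n))) :=
      Real.sqrt_le_sqrt hqe
    have h2 : Real.sqrt (Real.exp (-(1/n))) = Real.exp (-(1/n)/2) :=
      (Real.exp_half _).symm
    rw [h2] at h1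
    have h3 : (-(1/n))/2 = -(1/(2*n)) := by ring
    rwa [h3] at h1
  have hpow : Real.sqrt (1 - 1/n) ^ (s-1) ≤ Real.exp (-(1/(2*n))) ^ (s-1) :=
    pow_le_pow_left₀ (Real.sqrt_nonneg _) hre _
  have hexp : Real.exp (-(1/(2*n))) ^ (s-1) = Real.exp (-((t-1)/(2*n))) := by
    rw [← Real.exp_nat_mul]
    congr 1
    have hc : ((s - 1 : ℕ) : ℝ) = t - 1 := by
      rw [Nat.cast_sub hs]; norm_num; exact ht_def.symm
    rw [hc]; ring
  -- main bound
  have h6 : t ^ 6 ≤ 2985984 * n ^ 6 * Real.exp (t/(2*n)) := by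
    have key := aux_pow6 (t/(2*n)) (by positivity)
    rw [div_pow] at key
    have key2 := (div_le_iff₀ (by positivity : (0:ℝ) < (2*n)^6)).mp key
    have : 46656 * Real.exp (t/(2*n)) * (2*n)^6
        = 2985984 * n ^ 6 * Real.exp (t/(2*n)) := by ring
    linarith [this ▸ key2]
  have hE2 : (0:ℝ) ≤ Real.exp (-((t-1)/(2*n))) := (Real.exp_nonneg _)
  have h7 : t ^ 6 * Real.exp (-((t-1)/(2*n)))
      ≤ 2985984 * n ^ 6 * (Real.exp (t/(2*n)) * Real.exp (-((t-1)/(2*n)))) := by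
    nlinarith [mul_le_mul_of_nonneg_right h6 hE2]
  have h8 : Real.exp (t/(2*n)) * Real.exp (-((t-1)/(2*n))) = Real.exp (1/(2*n)) := by
    rw [← Real.exp_add]; congr 1; field_simp; ring
  have h9 : Real.exp (1/(2*n)) ≤ 2 := by
    have : (1:ℝ)/(2*n) ≤ 1/2 := by
      rw [div_le_div_iff₀ (by positivity) (by norm_num)]; linarith
    calc Real.exp (1/(2*n)) ≤ Real.exp (1/2) := Real.exp_le_exp.mpr this
      _ ≤ 2 := aux_exp_half_le_two
  have h10 : t ^ 6 * Real.exp (-((t-1)/(2*n))) ≤ 5971968 * n ^ 6 := by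
    rw [h8] at h7
    nlinarith [h7, h9, pow_pos hn0 6]
  calc t ^ 6 * Real.sqrt (1 - 1/n) ^ (s-1)
      ≤ t ^ 6 * Real.exp (-((t-1)/(2*n))) := by
        rw [← hexp]
        exact mul_le_mul_of_nonneg_left hpow (by positivity)
    _ ≤ 5971968 * n ^ 6 := h10

theorem stmt_11 : ∃ C : ℝ, 0 < C ∧ ∀ N : ℕ, 1 ≤ N →
    (Summable fun l : ℕ =>
      Real.sqrt (∑' s : ℕ,
        if l + 1 ≤ s then (s : ℝ) ^ 6 * (1 - 1 / (N : ℝ)) ^ (s - 1) * (1 / (N : ℝ)) else 0)) ∧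
    (∑' l : ℕ,
      Real.sqrt (∑' s : ℕ,
        if l + 1 ≤ s then (s : ℝ) ^ 6 * (1 - 1 / (N : ℝ)) ^ (s - 1) * (1 / (N : ℝ)) else 0))
      ≤ C * N ^ 4 := by
  refine ⟨13824, by norm_num, fun N hN => ?_⟩
  set n : ℝ := (N : ℝ) with hn_def
  have hn : 1 ≤ n := by rw [hn_def]; exact_mod_cast hN
  have hn0 : 0 < n := lt_of_lt_of_le one_pos hn
  set q : ℝ := 1 - 1/n with hq_def
  set r : ℝ := Real.sqrt q with hr_def
  set u : ℝ := Real.sqrt r with hu_def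
  have h1n : 0 < 1/n := by positivity
  have h1n1 : 1/n ≤ 1 := by rw [div_le_one hn0]; linarith
  have hq0 : 0 ≤ q := by rw [hq_def]; linarith
  have hq1 : q ≤ 1 := by rw [hq_def]; linarith
  have hr0 : 0 ≤ r := Real.sqrt_nonneg _
  have hr2 : r ^ 2 = q := Real.sq_sqrt hq0
  have hrle1 : r ≤ 1 := Real.sqrt_le_one.mpr hq1
  have hu0 : 0 ≤ u := Real.sqrt_nonneg _
  have hu2 : u ^ 2 = r := Real.sq_sqrt hr0
  have hule1 : u ≤ 1 := Real.sqrt_le_one.mpr hrle1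
  have hr_gap : (1/n)/2 ≤ 1 - r := by
    have hr2' : r ^ 2 = 1 - 1/n := by rw [hr2, hq_def]
    nlinarith [sq_nonneg (1 - r), hr2']
  have hu_gap : (1/n)/4 ≤ 1 - u := by nlinarith [sq_nonneg (1 - u), hu2, hr_gap]
  have hr1 : r < 1 := by linarith
  have hu1 : u < 1 := by linarith
  -- inner-sum analysis
  set f : ℕ → ℕ → ℝ := fun l s =>
    if l + 1 ≤ s then (s : ℝ) ^ 6 * q ^ (s - 1) * (1 / n) else 0 with hf_def
  set g : ℕ → ℕ → ℝ := fun l s =>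
    if l + 1 ≤ s then (5971968 * n ^ 6 * (1/n)) * r ^ (s - 1) else 0 with hg_def
  have hf_nonneg : ∀ l s, 0 ≤ f l s := by
    intro l s
    rw [hf_def]
    dsimp only
    split
    · positivity
    · exact le_refl 0
  have hfg : ∀ l s, f l s ≤ g l s := by
    intro l s
    rw [hf_def, hg_def]
    dsimp only
    split
    · rename_i h
      have hs1 : 1 ≤ s := le_trans (Nat.le_add_left 1 l) h
      have hq_eq : q ^ (s-1) = r ^ (s-1) * r ^ (s-1) := by
        rw [← hr2, sq, mul_pow]
      have huni := aux_unif n hn s hs1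
      rw [← hq_def, ← hr_def] at huni
      have h0 : (0:ℝ) ≤ r ^ (s-1) * (1/n) := by positivity
      have h2 := mul_le_mul_of_nonneg_right huni h0
      rw [hq_eq]
      nlinarith [h2]
    · exact le_refl 0
  have hg_sum : ∀ l, Summable (g l) := by
    intro l
    rw [← summable_nat_add_iff (l+1)]
    have heq : (fun i => g l (i + (l+1)))
        = fun i => ((5971968 * n ^ 6 * (1/n)) * r ^ l) * r ^ i := by
      funext i
      rw [hg_def]
      dsimp only
      rw [if_pos (by omega)]
      have hidx : (i + (l+1)) - 1 = i + l := by omega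
      rw [hidx, pow_add]
      ring
    rw [heq]
    exact (summable_geometric_of_lt_one hr0 hr1).mul_left _
  have hf_sum : ∀ l, Summable (f l) := fun l =>
    Summable.of_nonneg_of_le (hf_nonneg l) (hfg l) (hg_sum l)
  have hg_tsum : ∀ l, ∑' s, g l s = (5971968 * n ^ 6 * (1/n)) * r ^ l * (1-r)⁻¹ := by
    intro l
    rw [← (hg_sum l).sum_add_tsum_nat_add (l+1)]
    have hz : ∑ i ∈ Finset.range (l+1), g l i = 0 := by
      apply Finset.sum_eq_zero
      intro i hi
      rw [hg_def]
      dsimp only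
      rw [if_neg (by simp at hi; omega)]
    rw [hz, zero_add]
    have heq : (fun i => g l (i + (l+1)))
        = fun i => ((5971968 * n ^ 6 * (1/n)) * r ^ l) * r ^ i := by
      funext i
      rw [hg_def]
      dsimp only
      rw [if_pos (by omega)]
      have hidx : (i + (l+1)) - 1 = i + l := by omega
      rw [hidx, pow_add]
      ring
    rw [heq, tsum_mul_left, tsum_geometric_of_lt_one hr0 hr1]
  have hinv_r : (1-r)⁻¹ ≤ 2*n := by
    rw [show (2*n : ℝ) = ((1/n)/2)⁻¹ by field_simp]
    exact inv_anti₀ (by linarith) hr_gap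
  have hinv_u : (1-u)⁻¹ ≤ 4*n := by
    rw [show (4*n : ℝ) = ((1/n)/4)⁻¹ by field_simp]
    exact inv_anti₀ (by linarith) hu_gap
  have hT_bound : ∀ l, ∑' s, f l s ≤ 11943936 * n ^ 6 * r ^ l := by
    intro l
    have h1 : ∑' s, f l s ≤ ∑' s, g l s :=
      Summable.tsum_le_tsum (hfg l) (hf_sum l) (hg_sum l)
    rw [hg_tsum l] at h1
    have hrl : (0:ℝ) ≤ r ^ l := by positivity
    have h2 : (5971968 * n ^ 6 * (1/n)) * r ^ l * (1-r)⁻¹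
        ≤ (5971968 * n ^ 6 * (1/n)) * r ^ l * (2*n) := by
      apply mul_le_mul_of_nonneg_left hinv_r (by positivity)
    have h3 : (5971968 * n ^ 6 * (1/n)) * r ^ l * (2*n) = 11943936 * n ^ 6 * r ^ l := by
      field_simp
      ring
    linarith [h2, h3 ▸ h2]
  have hsqrt_bound : ∀ l, Real.sqrt (∑' s, f l s) ≤ 3456 * n ^ 3 * u ^ l := by
    intro l
    have h1 : Real.sqrt (∑' s, f l s) ≤ Real.sqrt (11943936 * n ^ 6 * r ^ l) :=
      Real.sqrt_le_sqrt (hT_bound l)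
    have hrl : r ^ l = (u ^ l) ^ 2 := by rw [← hu2]; ring
    have h2 : Real.sqrt (11943936 * n ^ 6 * r ^ l) = 3456 * n ^ 3 * u ^ l := by
      rw [hrl, show (11943936:ℝ) * n ^ 6 * (u ^ l) ^ 2 = (3456 * n ^ 3 * u ^ l) ^ 2 by ring,
        Real.sqrt_sq (by positivity)]
    rw [h2] at h1
    exact h1
  have hmaj_sum : Summable (fun l : ℕ => 3456 * n ^ 3 * u ^ l) :=
    (summable_geometric_of_lt_one hu0 hu1).mul_left _
  have houter_sum : Summable (fun l : ℕ => Real.sqrt (∑' s, f l s)) :=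
    Summable.of_nonneg_of_le (fun l => Real.sqrt_nonneg _) hsqrt_bound hmaj_sum
  refine ⟨houter_sum, ?_⟩
  have h1 : ∑' l, Real.sqrt (∑' s, f l s) ≤ ∑' l : ℕ, 3456 * n ^ 3 * u ^ l :=
    Summable.tsum_le_tsum hsqrt_bound houter_sum hmaj_sum
  have h2 : ∑' l : ℕ, 3456 * n ^ 3 * u ^ l = 3456 * n ^ 3 * (1-u)⁻¹ := by
    rw [tsum_mul_left, tsum_geometric_of_lt_one hu0 hu1]
  have h3 : 3456 * n ^ 3 * (1-u)⁻¹ ≤ 3456 * n ^ 3 * (4*n) :=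
    mul_le_mul_of_nonneg_left hinv_u (by positivity)
  have h4 : 3456 * n ^ 3 * (4*n) = 13824 * n ^ 4 := by ring
  calc ∑' l, Real.sqrt (∑' s, f l s) ≤ 3456 * n ^ 3 * (1-u)⁻¹ := by rw [← h2]; exact h1
    _ ≤ 13824 * n ^ 4 := by rw [← h4]; exact h3
end

section
/- There exists an absolute constant C > 0 such that the following holds for all integers N ≥ 1 and k ≥ 1. Let θ₁, …, θ_{k−1} be independent random variables, each uniformly distributed on {1,…,N}, and define the random index k₁ = max{ 1 ≤ l ≤ k−1 : θ_l = 1 } if some θ_l equals 1, and k₁ = 0 otherwise. Then Σ_{l=0}^{k−1} ( E[ (k − k₁)⁶ · 1_{k₁ ≤ l} ] )^{1/2} ≤ C·N⁴. -/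
/-- The last step `l ∈ {1, …, n}` at which `θ l = 1` (component index `0 : Fin N`,
with steps `1, …, n` encoded by `Fin n` via `j ↦ j + 1`), or `0` if index `1` never occurs. -/
def lastHit {N n : ℕ} (θ : Fin n → Fin N) : ℕ :=
  if h : (Finset.univ.filter fun j => (θ j : ℕ) = 0).Nonempty then
    ((Finset.univ.filter fun j => (θ j : ℕ) = 0).max' h).val + 1
  else 0

lemma card_filter_ne (N : ℕ) (hN : 1 ≤ N) :
    (Finset.univ.filter fun x : Fin N => ¬ ((x : ℕ) = 0)).card = N - 1 := by
  haveI : NeZero N := ⟨by omega⟩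
  have : (Finset.univ.filter fun x : Fin N => ¬ ((x : ℕ) = 0)) = Finset.univ.erase 0 := by
    ext x
    simp only [Finset.mem_filter, Finset.mem_univ, true_and, Finset.mem_erase, and_true]
    rw [Ne, Fin.ext_iff, Fin.val_zero]
  rw [this, Finset.card_erase_of_mem (Finset.mem_univ _)]
  simp

lemma card_filter_eq (N : ℕ) (hN : 1 ≤ N) :
    (Finset.univ.filter fun x : Fin N => (x : ℕ) = 0).card = 1 := by
  haveI : NeZero N := ⟨by omega⟩
  have : (Finset.univ.filter fun x : Fin N => (x : ℕ) = 0) = {0} := by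
    ext x
    simp only [Finset.mem_filter, Finset.mem_univ, true_and, Finset.mem_singleton]
    rw [Fin.ext_iff, Fin.val_zero]
  rw [this]; simp

lemma card_fiber_pos (N n m : ℕ) (hN : 1 ≤ N) (hm : 1 ≤ m) (hmn : m ≤ n) :
    (Finset.univ.filter fun θ : Fin n → Fin N => lastHit θ = m).card ≤ N^(m-1) * (N-1)^(n-m) := by
  classical
  set t : Fin n → Finset (Fin N) := fun j =>
    if (j : ℕ) + 1 = m then Finset.univ.filter (fun x : Fin N => (x:ℕ) = 0)
    else if m ≤ (j : ℕ) then Finset.univ.filter (fun x : Fin N => ¬ ((x:ℕ) = 0))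
    else Finset.univ with ht
  have hsub : (Finset.univ.filter fun θ : Fin n → Fin N => lastHit θ = m) ⊆
      Fintype.piFinset t := by
    intro θ hθ
    rw [Finset.mem_filter] at hθ
    have h0 := hθ.2
    rw [Fintype.mem_piFinset]
    unfold lastHit at h0
    split at h0
    · next h =>
      have hθ0 : (θ ((Finset.univ.filter fun j => (θ j : ℕ) = 0).max' h) : ℕ) = 0 := by
        have := Finset.max'_mem _ h
        rw [Finset.mem_filter] at this
        exact this.2
      intro j
      rw [ht]
      simp only
      split
      · next hje =>
        have hjeq : j = (Finset.univ.filter fun j => (θ j : ℕ) = 0).max' h :=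
          Fin.ext (by omega)
        simp only [Finset.mem_filter, Finset.mem_univ, true_and]
        rw [hjeq]
        exact hθ0
      · split
        · next hne hle =>
          simp only [Finset.mem_filter, Finset.mem_univ, true_and]
          intro hj0
          have hjF : j ∈ Finset.univ.filter fun j => (θ j : ℕ) = 0 := by
            rw [Finset.mem_filter]; exact ⟨Finset.mem_univ _, hj0⟩
          have hle2 : (j:ℕ) ≤ (((Finset.univ.filter fun j => (θ j : ℕ) = 0).max' h) : ℕ) :=
            Finset.le_max' _ j hjF
          omega
        · exact Finset.mem_univ _
    · omega
  have hcard : (Fintype.piFinset t).card = N^(m-1) * (N-1)^(n-m) := by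
    rw [Fintype.card_piFinset]
    have hw : ∀ j : Fin n, (t j).card =
        (fun i : ℕ => if i + 1 = m then 1 else if m ≤ i then N - 1 else N) (j : ℕ) := by
      intro j
      rw [ht]
      simp only
      split
      · exact card_filter_eq N hN
      · split
        · exact card_filter_ne N hN
        · simp
    calc ∏ j : Fin n, (t j).card
        = ∏ i ∈ Finset.range n, (fun i : ℕ => if i + 1 = m then 1 else if m ≤ i then N - 1 else N) i := by
          rw [← Fin.prod_univ_eq_prod_range]
          exact Finset.prod_congr rfl (fun j _ => hw j)
      _ = N^(m-1) * (N-1)^(n-m) := by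
          rw [Finset.range_eq_Ico]
          rw [← Finset.prod_Ico_consecutive _ (Nat.zero_le (m-1)) (le_trans (by omega) hmn)]
          rw [← Finset.prod_Ico_consecutive _ (by omega : m - 1 ≤ m) hmn]
          have h1 : ∏ i ∈ Finset.Ico 0 (m-1),
              (if i + 1 = m then 1 else if m ≤ i then N - 1 else N) = N^(m-1) := by
            rw [Finset.prod_congr rfl (fun i hi => ?_), Finset.prod_const, Nat.card_Ico]
            · rfl
            · rw [Finset.mem_Ico] at hi
              rw [if_neg (by omega), if_neg (by omega)]
          have h2 : ∏ i ∈ Finset.Ico (m-1) m,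
              (if i + 1 = m then 1 else if m ≤ i then N - 1 else N) = 1 := by
            have : Finset.Ico (m-1) m = {m-1} := by
              ext i
              simp only [Finset.mem_Ico, Finset.mem_singleton]
              omega
            rw [this, Finset.prod_singleton, if_pos (by omega)]
          have h3 : ∏ i ∈ Finset.Ico m n,
              (if i + 1 = m then 1 else if m ≤ i then N - 1 else N) = (N-1)^(n-m) := by
            rw [Finset.prod_congr rfl (fun i hi => ?_), Finset.prod_const, Nat.card_Ico]
            · rw [Finset.mem_Ico] at hi
              rw [if_neg (by omega), if_pos (by omega)]
          rw [h1, h2, h3]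
          ring
  calc _ ≤ _ := Finset.card_le_card hsub
    _ = N^(m-1) * (N-1)^(n-m) := hcard

lemma lastHit_le {N n : ℕ} (θ : Fin n → Fin N) : lastHit θ ≤ n := by
  unfold lastHit
  split
  · next h => have := (((Finset.univ.filter fun j => (θ j : ℕ) = 0)).max' h).isLt; omega
  · omega



lemma sum_pow_le_inv (v : ℝ) (h0 : 0 ≤ v) (h1 : v < 1) (M : ℕ) :
    ∑ i ∈ Finset.range M, v^i ≤ 1/(1-v) := by
  have hg : (∑ i ∈ Finset.range M, v^i) * (v - 1) = v^M - 1 := geom_sum_mul v M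
  rw [le_div_iff₀ (by linarith)]
  nlinarith [pow_nonneg h0 M]

lemma one_sub_exp (y : ℝ) (h0 : 0 < y) (h1 : y ≤ 1) : y/2 ≤ 1 - Real.exp (-y) := by
  have h2 := Real.add_one_le_exp y
  have h3 : Real.exp (-y) = 1 / Real.exp y := by
    rw [Real.exp_neg]; ring
  have h4 : Real.exp y > 0 := Real.exp_pos y
  have h5 : 1/Real.exp y ≤ 1/(y+1) := by
    apply one_div_le_one_div_of_le (by linarith) h2
  have h6 : 1/(y+1) ≤ 1 - y/2 := by
    rw [div_le_iff₀ (by linarith)]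
    nlinarith
  rw [h3]
  linarith

lemma geom_main (N : ℕ) (hN : 1 ≤ N) (M : ℕ) :
    ∑ i ∈ Finset.range M, (Real.exp (-(1/(4*(N:ℝ)))))^i ≤ 8*N := by
  have hN0 : (0:ℝ) < N := by exact_mod_cast hN
  have hN1 : (1:ℝ) ≤ N := by exact_mod_cast hN
  have hy0 : (0:ℝ) < 1/(4*(N:ℝ)) := by positivity
  have hy1 : 1/(4*(N:ℝ)) ≤ 1 := by
    rw [div_le_one (by positivity)]; linarith
  have hsub := one_sub_exp _ hy0 hy1
  have hv1 : Real.exp (-(1/(4*(N:ℝ)))) < 1 := by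
    rw [Real.exp_lt_one_iff]; linarith
  calc ∑ i ∈ Finset.range M, (Real.exp (-(1/(4*(N:ℝ)))))^i
      ≤ 1/(1 - Real.exp (-(1/(4*(N:ℝ))))) := sum_pow_le_inv _ (Real.exp_pos _).le hv1 M
    _ ≤ 8*N := by
        rw [div_le_iff₀ (by linarith)]
        have h7 : 1/(8*(N:ℝ)) ≤ 1 - Real.exp (-(1/(4*(N:ℝ)))) := by
          calc 1/(8*(N:ℝ)) = (1/(4*(N:ℝ)))/2 := by ring
            _ ≤ _ := hsub
        have h8 : 8*(N:ℝ)*(1/(8*(N:ℝ))) = 1 := by field_simp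
        have h9 := mul_le_mul_of_nonneg_left h7 (show (0:ℝ) ≤ 8*(N:ℝ) by positivity)
        linarith

lemma poly_exp (N j : ℕ) (hN : 1 ≤ N) (hj : 1 ≤ j) :
    (j:ℝ)^6 * Real.exp (-(1/(4*(N:ℝ))))^(2*(j-1)) ≤ 1000000 * (N:ℝ)^6 := by
  have hN0 : (0:ℝ) < N := by exact_mod_cast hN
  have hN1 : (1:ℝ) ≤ N := by exact_mod_cast hN
  have hj0 : (1:ℝ) ≤ j := by exact_mod_cast hj
  set x : ℝ := (j:ℝ)/(2*N) with hxdef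
  have hx0 : 0 ≤ x := by positivity
  -- x^6 ≤ 720 exp x
  have hxe : x^6 ≤ 720 * Real.exp x := by
    have h1 := Real.sum_le_exp_of_nonneg hx0 7
    have h2 : x^6 / (Nat.factorial 6) ≤ ∑ i ∈ Finset.range 7, x^i / (Nat.factorial i) :=
      Finset.single_le_sum (f := fun i => x^i / (Nat.factorial i))
        (fun i _ => by positivity) (by simp)
    have h3 : x^6 / (Nat.factorial 6 : ℝ) = x^6/720 := by norm_num [Nat.factorial]
    rw [h3] at h2
    linarith
  have hx6 : x^6 * Real.exp (-x) ≤ 720 := by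
    have := mul_le_mul_of_nonneg_right hxe (Real.exp_pos (-x)).le
    rwa [mul_assoc, ← Real.exp_add, add_neg_cancel, Real.exp_zero, mul_one] at this
  have hE : Real.exp (1/(2*(N:ℝ))) ≤ 3 := by
    have h1 : (1:ℝ)/(2*N) ≤ 1 := by
      rw [div_le_one (by positivity)]; linarith
    calc Real.exp (1/(2*(N:ℝ))) ≤ Real.exp 1 := Real.exp_le_exp.2 h1
      _ ≤ 3 := by
          have := Real.exp_one_lt_d9
          linarith
  have hvpow : Real.exp (-(1/(4*(N:ℝ))))^(2*(j-1)) =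
      Real.exp (-x) * Real.exp (1/(2*(N:ℝ))) := by
    rw [← Real.exp_nat_mul, ← Real.exp_add]
    congr 1
    have hc : ((2*(j-1) : ℕ) : ℝ) = 2*((j:ℝ)-1) := by
      push_cast [Nat.cast_sub hj]
      ring
    rw [hc, hxdef]
    field_simp
    ring
  rw [hvpow]
  have hjx : (j:ℝ) = 2*N*x := by
    rw [hxdef]; field_simp
  rw [hjx]
  have hprod : (x^6 * Real.exp (-x)) * Real.exp (1/(2*(N:ℝ))) ≤ 720 * 3 := by
    apply mul_le_mul hx6 hE (Real.exp_pos _).le (by norm_num)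
  have hN6 : (0:ℝ) < (N:ℝ)^6 := by positivity
  calc (2*(N:ℝ)*x)^6 * (Real.exp (-x) * Real.exp (1/(2*(N:ℝ))))
      = 64 * (N:ℝ)^6 * ((x^6 * Real.exp (-x)) * Real.exp (1/(2*(N:ℝ)))) := by ring
    _ ≤ 64 * (N:ℝ)^6 * (720*3) := by
        apply mul_le_mul_of_nonneg_left hprod (by positivity)
    _ ≤ 1000000 * (N:ℝ)^6 := by nlinarith

lemma indic_geom (x : ℝ) (hx : 0 ≤ x) (l K : ℕ) :
    ∑ m ∈ Finset.Ico 1 K, (if m ≤ l then x^(l-m) else 0) ≤ ∑ i ∈ Finset.range l, x^i := by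
  rw [← Finset.sum_filter]
  have hinj : ∀ a ∈ (Finset.Ico 1 K).filter (· ≤ l), ∀ b ∈ (Finset.Ico 1 K).filter (· ≤ l),
      l - a = l - b → a = b := by
    intro a ha b hb hab
    simp only [Finset.mem_filter, Finset.mem_Ico] at ha hb
    omega
  calc ∑ m ∈ (Finset.Ico 1 K).filter (· ≤ l), x^(l-m)
      = ∑ i ∈ ((Finset.Ico 1 K).filter (· ≤ l)).image (l - ·), x^i :=
        (Finset.sum_image hinj).symm
    _ ≤ ∑ i ∈ Finset.range l, x^i := by
        apply Finset.sum_le_sum_of_subset_of_nonneg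
        · intro i hi
          rw [Finset.mem_image] at hi
          obtain ⟨m, hm, rfl⟩ := hi
          simp only [Finset.mem_filter, Finset.mem_Ico] at hm
          rw [Finset.mem_range]
          omega
        · intro i _ _
          positivity

lemma card_fiber_zero (N n : ℕ) (hN : 1 ≤ N) :
    (Finset.univ.filter fun θ : Fin n → Fin N => lastHit θ = 0).card ≤ (N-1)^n := by
  classical
  have hsub : (Finset.univ.filter fun θ : Fin n → Fin N => lastHit θ = 0) ⊆
      Fintype.piFinset (fun _ : Fin n => Finset.univ.filter fun x : Fin N => ¬ ((x:ℕ) = 0)) := by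
    intro θ hθ
    rw [Finset.mem_filter] at hθ
    have h0 := hθ.2
    rw [Fintype.mem_piFinset]
    intro j
    simp only [Finset.mem_filter, Finset.mem_univ, true_and]
    intro hj
    unfold lastHit at h0
    split at h0
    · omega
    · next h => exact h ⟨j, by simp [hj]⟩
  calc _ ≤ _ := Finset.card_le_card hsub
    _ = (N-1)^n := by
        rw [Fintype.card_piFinset]
        simp [card_filter_ne N hN]
theorem stmt_13 : ∃ C : ℝ, 0 < C ∧ ∀ N k : ℕ, 1 ≤ N → 1 ≤ k →
    ∑ l ∈ Finset.range k,
      Real.sqrt ((∑ θ : Fin (k - 1) → Fin N,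
          if lastHit θ ≤ l then ((k - lastHit θ : ℕ) : ℝ) ^ 6 else 0) / (N : ℝ) ^ (k - 1))
      ≤ C * N ^ 4 := by
  classical
  refine ⟨24000, by norm_num, ?_⟩
  intro N k hN hk
  have hN0 : (0:ℝ) < N := by exact_mod_cast hN
  have hN1 : (1:ℝ) ≤ N := by exact_mod_cast hN
  set v : ℝ := Real.exp (-(1/(4*(N:ℝ)))) with hvdef
  have hv0 : 0 < v := Real.exp_pos _
  have hv1 : v < 1 := by
    rw [hvdef, Real.exp_lt_one_iff]
    have : (0:ℝ) < 1/(4*(N:ℝ)) := by positivity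
    linarith
  have hqv : ((N:ℝ)-1)/(N:ℝ) ≤ v^4 := by
    have h1 : v^4 = Real.exp (-(1/(N:ℝ))) := by
      rw [hvdef, ← Real.exp_nat_mul]
      congr 1
      push_cast
      field_simp
    have h2 := Real.add_one_le_exp (-(1/(N:ℝ)))
    rw [h1]
    have h3 : ((N:ℝ)-1)/(N:ℝ) = -(1/(N:ℝ)) + 1 := by field_simp; ring
    linarith [h3.le, h3.ge]
  have hq0 : (0:ℝ) ≤ ((N:ℝ)-1)/(N:ℝ) := by
    apply div_nonneg (by linarith) (by linarith)
  -- key per-l bound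
  have key : ∀ l ∈ Finset.range k, (∑ θ : Fin (k - 1) → Fin N,
      if lastHit θ ≤ l then ((k - lastHit θ : ℕ) : ℝ) ^ 6 else 0) / (N : ℝ) ^ (k - 1)
      ≤ 9000000 * (N:ℝ)^6 * (v^(k-1-l))^2 := by
    intro l hl
    rw [Finset.mem_range] at hl
    set f : ℕ → ℝ := fun m => if m ≤ l then ((k - m : ℕ) : ℝ) ^ 6 else 0 with hfdef
    have hf0 : ∀ m, 0 ≤ f m := by
      intro m; rw [hfdef]; dsimp only; split <;> positivity
    have hfib : (∑ θ : Fin (k - 1) → Fin N,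
        if lastHit θ ≤ l then ((k - lastHit θ : ℕ) : ℝ) ^ 6 else 0)
        = ∑ m ∈ Finset.range k,
            (((Finset.univ.filter fun θ : Fin (k-1) → Fin N => lastHit θ = m).card : ℝ) * f m) := by
      have hmap : ∀ θ : Fin (k-1) → Fin N, θ ∈ Finset.univ → lastHit θ ∈ Finset.range k :=
        fun θ _ => Finset.mem_range.2 (by have := lastHit_le θ; omega)
      rw [← Finset.sum_fiberwise_of_maps_to hmap (fun θ : Fin (k-1) → Fin N => f (lastHit θ))]
      apply Finset.sum_congr rfl
      intro m _
      rw [Finset.sum_congr rfl (fun θ hθ => by rw [(Finset.mem_filter.1 hθ).2]),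
        Finset.sum_const, nsmul_eq_mul]
    have hstep1 : (∑ θ : Fin (k - 1) → Fin N,
        if lastHit θ ≤ l then ((k - lastHit θ : ℕ) : ℝ) ^ 6 else 0)
        ≤ ∑ m ∈ Finset.range k,
            (((if m = 0 then (N-1)^(k-1) else N^(m-1)*(N-1)^(k-1-m) : ℕ) : ℝ) * f m) := by
      rw [hfib]
      apply Finset.sum_le_sum
      intro m hm
      rw [Finset.mem_range] at hm
      apply mul_le_mul_of_nonneg_right _ (hf0 m)
      by_cases h0 : m = 0
      · subst h0
        rw [if_pos rfl]
        exact_mod_cast card_fiber_zero N (k-1) hN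
      · rw [if_neg h0]
        by_cases hmk : m ≤ k - 1
        · exact_mod_cast card_fiber_pos N (k-1) m hN (by omega) hmk
        · -- fiber empty since lastHit ≤ k-1 < m
          have : (Finset.univ.filter fun θ : Fin (k-1) → Fin N => lastHit θ = m) = ∅ := by
            apply Finset.filter_eq_empty_iff.2
            intro θ _
            have := lastHit_le θ
            omega
          rw [this]
          simp
          positivity
    -- divide and bound termwise
    have hNpow : (0:ℝ) < (N:ℝ)^(k-1) := by positivity
    rw [div_le_iff₀ hNpow]
    calc (∑ θ : Fin (k - 1) → Fin N,
        if lastHit θ ≤ l then ((k - lastHit θ : ℕ) : ℝ) ^ 6 else 0)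
        ≤ ∑ m ∈ Finset.range k,
            (((if m = 0 then (N-1)^(k-1) else N^(m-1)*(N-1)^(k-1-m) : ℕ) : ℝ) * f m) := hstep1
      _ ≤ 9000000 * (N:ℝ)^6 * (v^(k-1-l))^2 * (N:ℝ)^(k-1) := by
          set X : ℝ := (v^(k-1-l))^2 with hXdef
          have hX0 : 0 ≤ X := by positivity
          rw [Finset.range_eq_Ico, Finset.sum_eq_sum_Ico_succ_bot (show 0 < k by omega)]
          -- the m = 0 term
          have hf0eq : f 0 = (k:ℝ)^6 := by
            rw [hfdef]
            simp
          have hcast0 : (((N-1)^(k-1) : ℕ) : ℝ) = ((N:ℝ)-1)^(k-1) := by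
            push_cast [Nat.cast_sub hN]
            ring
          have hT0 : (((if 0 = 0 then (N-1)^(k-1) else N^(0-1)*(N-1)^(k-1-0) : ℕ)) : ℝ) * f 0
              ≤ 1000000 * (N:ℝ)^6 * X * (N:ℝ)^(k-1) := by
            rw [if_pos rfl, hf0eq, hcast0]
            have hsplit2 : ((N:ℝ)-1)^(k-1) = (((N:ℝ)-1)/N)^(k-1) * (N:ℝ)^(k-1) := by
              rw [div_pow]
              field_simp
            have e1 : (((N:ℝ)-1)/N)^(k-1) ≤ (v^4)^(k-1) := pow_le_pow_left₀ hq0 hqv _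
            have e2 : (v^4)^(k-1) = v^(2*(k-1)) * ((v^(k-1-l))^2 * (v^2)^(l-0)) := by
              simp only [← pow_mul, ← pow_add]
              congr 1
              omega
            have e3 : (k:ℝ)^6 * v^(2*(k-1)) ≤ 1000000*(N:ℝ)^6 := poly_exp N k hN hk
            have hclean : (k:ℝ)^6 * (((N:ℝ)-1)/N)^(k-1) ≤ 1000000 * (N:ℝ)^6 * X := by
              calc (k:ℝ)^6 * (((N:ℝ)-1)/N)^(k-1)
                  ≤ (k:ℝ)^6 * (v^4)^(k-1) :=
                    mul_le_mul_of_nonneg_left e1 (by positivity)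
                _ = ((k:ℝ)^6 * v^(2*(k-1))) * ((v^(k-1-l))^2 * (v^2)^(l-0)) := by
                    rw [e2]; ring
                _ ≤ (1000000*(N:ℝ)^6) * ((v^(k-1-l))^2 * (v^2)^(l-0)) :=
                    mul_le_mul_of_nonneg_right e3 (by positivity)
                _ ≤ 1000000 * (N:ℝ)^6 * X := by
                    rw [hXdef]
                    have hvle : (v^2)^(l-0) ≤ 1 :=
                      pow_le_one₀ (by positivity) (pow_le_one₀ hv0.le hv1.le)
                    have h := mul_le_mul_of_nonneg_left hvle (sq_nonneg (v^(k-1-l)))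
                    rw [mul_one] at h
                    exact mul_le_mul_of_nonneg_left h (by positivity)
            calc ((N:ℝ)-1)^(k-1) * (k:ℝ)^6
                = ((k:ℝ)^6 * (((N:ℝ)-1)/N)^(k-1)) * (N:ℝ)^(k-1) := by
                  rw [hsplit2]; ring
              _ ≤ (1000000 * (N:ℝ)^6 * X) * (N:ℝ)^(k-1) :=
                  mul_le_mul_of_nonneg_right hclean (by positivity)
              _ = 1000000 * (N:ℝ)^6 * X * (N:ℝ)^(k-1) := by ring
          -- the m ≥ 1 terms
          have hTm : ∀ m ∈ Finset.Ico 1 k,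
              (((if m = 0 then (N-1)^(k-1) else N^(m-1)*(N-1)^(k-1-m) : ℕ)) : ℝ) * f m
              ≤ 1000000*(N:ℝ)^5 * X * (N:ℝ)^(k-1) * (if m ≤ l then (v^2)^(l-m) else 0) := by
            intro m hm
            rw [Finset.mem_Ico] at hm
            rw [if_neg (by omega)]
            by_cases hml : m ≤ l
            · rw [hfdef]
              simp only
              rw [if_pos hml, if_pos hml]
              have hcastm : ((N^(m-1)*(N-1)^(k-1-m) : ℕ) : ℝ)
                  = (N:ℝ)^(m-1) * ((N:ℝ)-1)^(k-1-m) := by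
                push_cast [Nat.cast_sub hN]
                ring
              rw [hcastm]
              have hsplit2 : ((N:ℝ)-1)^(k-1-m) = (((N:ℝ)-1)/N)^(k-1-m) * (N:ℝ)^(k-1-m) := by
                rw [div_pow]
                field_simp
              have hNsplit : (N:ℝ)^(k-1) = (N:ℝ)^(m-1) * (N:ℝ)^(k-1-m) * N := by
                rw [← pow_add, ← pow_succ]
                congr 1
                omega
              have e1 : (((N:ℝ)-1)/N)^(k-1-m) ≤ (v^4)^(k-1-m) := pow_le_pow_left₀ hq0 hqv _
              have e2 : (v^4)^(k-1-m) = v^(2*((k-m)-1)) * ((v^(k-1-l))^2 * (v^2)^(l-m)) := by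
                simp only [← pow_mul, ← pow_add]
                congr 1
                omega
              have e3 : ((k-m:ℕ):ℝ)^6 * v^(2*((k-m)-1)) ≤ 1000000*(N:ℝ)^6 :=
                poly_exp N (k-m) hN (by omega)
              have hclean : ((k-m:ℕ):ℝ)^6 * (((N:ℝ)-1)/N)^(k-1-m)
                  ≤ 1000000 * (N:ℝ)^6 * ((v^(k-1-l))^2 * (v^2)^(l-m)) := by
                calc ((k-m:ℕ):ℝ)^6 * (((N:ℝ)-1)/N)^(k-1-m)
                    ≤ ((k-m:ℕ):ℝ)^6 * (v^4)^(k-1-m) :=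
                      mul_le_mul_of_nonneg_left e1 (by positivity)
                  _ = (((k-m:ℕ):ℝ)^6 * v^(2*((k-m)-1))) * ((v^(k-1-l))^2 * (v^2)^(l-m)) := by
                      rw [e2]; ring
                  _ ≤ 1000000*(N:ℝ)^6 * ((v^(k-1-l))^2 * (v^2)^(l-m)) :=
                      mul_le_mul_of_nonneg_right e3 (by positivity)
              calc (N:ℝ)^(m-1) * ((N:ℝ)-1)^(k-1-m) * ((k-m:ℕ):ℝ)^6
                  = (((k-m:ℕ):ℝ)^6 * (((N:ℝ)-1)/N)^(k-1-m)) * ((N:ℝ)^(m-1) * (N:ℝ)^(k-1-m)) := by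
                    rw [hsplit2]; ring
                _ ≤ (1000000 * (N:ℝ)^6 * ((v^(k-1-l))^2 * (v^2)^(l-m)))
                      * ((N:ℝ)^(m-1) * (N:ℝ)^(k-1-m)) :=
                    mul_le_mul_of_nonneg_right hclean (by positivity)
                _ = 1000000*(N:ℝ)^5 * (v^(k-1-l))^2 * (N:ℝ)^(k-1) * (v^2)^(l-m) := by
                    rw [hNsplit]; ring
            · rw [hfdef]
              simp only
              rw [if_neg hml, if_neg hml]
              simp
          calc (((if 0 = 0 then (N-1)^(k-1) else N^(0-1)*(N-1)^(k-1-0) : ℕ)) : ℝ) * f 0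
                + ∑ m ∈ Finset.Ico 1 k,
                  (((if m = 0 then (N-1)^(k-1) else N^(m-1)*(N-1)^(k-1-m) : ℕ)) : ℝ) * f m
              ≤ 1000000 * (N:ℝ)^6 * X * (N:ℝ)^(k-1)
                + ∑ m ∈ Finset.Ico 1 k,
                  1000000*(N:ℝ)^5 * X * (N:ℝ)^(k-1) * (if m ≤ l then (v^2)^(l-m) else 0) :=
                add_le_add hT0 (Finset.sum_le_sum hTm)
            _ ≤ 1000000 * (N:ℝ)^6 * X * (N:ℝ)^(k-1)
                + 1000000*(N:ℝ)^5 * X * (N:ℝ)^(k-1) * (8*(N:ℝ)) := by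
                have hg : ∑ m ∈ Finset.Ico 1 k, (if m ≤ l then (v^2)^(l-m) else 0) ≤ 8*(N:ℝ) := by
                  calc ∑ m ∈ Finset.Ico 1 k, (if m ≤ l then (v^2)^(l-m) else 0)
                      ≤ ∑ i ∈ Finset.range l, (v^2)^i := indic_geom _ (by positivity) l k
                    _ ≤ ∑ i ∈ Finset.range l, v^i := by
                        apply Finset.sum_le_sum
                        intro i _
                        rw [← pow_mul]
                        exact pow_le_pow_of_le_one hv0.le hv1.le (by omega)
                    _ ≤ 8*(N:ℝ) := geom_main N hN l
                rw [← Finset.mul_sum]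
                have := mul_le_mul_of_nonneg_left hg
                  (show (0:ℝ) ≤ 1000000*(N:ℝ)^5 * X * (N:ℝ)^(k-1) by positivity)
                linarith
            _ = 9000000 * (N:ℝ)^6 * X * (N:ℝ)^(k-1) := by ring
  calc ∑ l ∈ Finset.range k,
      Real.sqrt ((∑ θ : Fin (k - 1) → Fin N,
          if lastHit θ ≤ l then ((k - lastHit θ : ℕ) : ℝ) ^ 6 else 0) / (N : ℝ) ^ (k - 1))
      ≤ ∑ l ∈ Finset.range k, 3000 * (N:ℝ)^3 * v^(k-1-l) := by
        apply Finset.sum_le_sum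
        intro l hl
        have h1 := Real.sqrt_le_sqrt (key l hl)
        have h2 : 9000000 * (N:ℝ)^6 * (v^(k-1-l))^2 = (3000 * (N:ℝ)^3 * v^(k-1-l))^2 := by
          ring
        rw [h2, Real.sqrt_sq (by positivity)] at h1
        exact h1
    _ = 3000 * (N:ℝ)^3 * ∑ l ∈ Finset.range k, v^(k-1-l) := by rw [Finset.mul_sum]
    _ ≤ 3000 * (N:ℝ)^3 * (8*(N:ℝ)) := by
        apply mul_le_mul_of_nonneg_left _ (by positivity)
        rw [Finset.sum_range_reflect (fun i => v^i) k]
        exact geom_main N hN k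
    _ ≤ 24000 * (N:ℝ)^4 := le_of_eq (by ring)
end
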